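/- arXiv:math-ph/0007006 — 9 statements merged into one kernel-verified Lean document; each statement's English description precedes it below -/
import Mathlib

section
/- If λ is an eigenvalue of the problem −u''(x) + (P(x²) − (ix)^{2n+1})u(x) = λu(x) (i.e., there exists an eigenfunction u for λ in the sense of the stated decay conditions), then λ ≠ 0, Re λ > 0, and |arg λ| ≤ π/(2n+3); equivalently, Re λ > 0 and |Im λ| ≤ tan(π/(2n+3))·Re λ. -/
/-!
Write `Q = P(z²) - (iz)^{2n+1} - λ`, so that `u'' = Q u`. Along a ray `t ↦ w t` put `v(t) = u(w t)`;
then `v'' = w² Q(w t) v`, whence the energy identity `(v̄ v')' = |v'|² + w² Q(w t) |v|²`.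
If the ray lies in the decay sector, `v̄ v'` vanishes at both ends, so for a real-linear functional
`L` the function `L(v̄ v')` cannot be nondecreasing without being constant.

On the real axis (`w = 1`, `L = Re`) the term `(it)^{2n+1}` is imaginary, so `Re λ ≤ 0` would make
`Re (v̄ v')` nondecreasing, forcing `v' = 0` and then `u = 0`. On the boundary rays
`w = e^{± iπ/(2(2n+3))}` (with `L = ± Im`) the angle is chosen so that `(i w t)^{2n+1} w²` is real
while every `w^{2k+2}`, `k ≤ n`, lies in the closed half-plane of the right sign; this gives
`± Im (λ e^{± iπ/(2n+3)}) ≥ 0`, which is the bound on `arg λ`.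
-/

open Complex Real ComplexConjugate

open Filter Topology

theorem deriv_eq_zero_of_nonneg_of_tendsto_cocompact {F D : ℝ → ℝ}
    (hF : ∀ t, HasDerivAt F (D t) t) (hD : ∀ t, 0 ≤ D t)
    (hlim : Tendsto F (cocompact ℝ) (𝓝 0)) (t : ℝ) : D t = 0 := by
  have hmono : Monotone F := monotone_of_hasDerivAt_nonneg hF hD
  rw [cocompact_eq_atBot_atTop, tendsto_sup] at hlim
  have hF0 : F = fun _ => 0 := funext fun s =>
    le_antisymm (hmono.ge_of_tendsto hlim.2 s) (hmono.le_of_tendsto hlim.1 s)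
  exact (hF t).unique (hF0 ▸ hasDerivAt_const t 0)

theorem eq_zero_of_hasDerivAt_zero_of_tendsto_cocompact {E : Type*} [NormedAddCommGroup E]
    [NormedSpace ℝ E] {v : ℝ → E} (hv : ∀ t, HasDerivAt v 0 t)
    (hlim : Tendsto v (cocompact ℝ) (𝓝 0)) (t : ℝ) : v t = 0 := by
  have hconst : v = fun _ => v t := funext fun s =>
    is_const_of_deriv_eq_zero (fun x => (hv x).differentiableAt) (fun x => (hv x).deriv) s t
  rw [hconst] at hlim
  exact tendsto_nhds_unique tendsto_const_nhds hlim

theorem tendsto_zero_of_norm_le_mul_exp_neg_rpow {ι E : Type*} [SeminormedAddCommGroup E]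
    {l : Filter ι} {f : ι → E} {r : ι → ℝ} {C c κ : ℝ} (hc : 0 < c) (hκ : 0 < κ)
    (hr : Tendsto r l atTop) (hf : ∀ x, ‖f x‖ ≤ C * exp (-c * r x ^ κ)) :
    Tendsto f l (𝓝 0) := by
  have hexp := ((tendsto_rpow_atTop hκ).comp hr).const_mul_atTop_of_neg (neg_lt_zero.2 hc)
  refine squeeze_zero_norm hf ?_
  simpa using (tendsto_exp_atBot.comp hexp).const_mul C

theorem tendsto_norm_mul_ofReal_cocompact {w : ℂ} (hw : w ≠ 0) :
    Tendsto (fun t : ℝ => ‖w * t‖) (cocompact ℝ) atTop := by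
  simp only [norm_mul, norm_real]
  exact tendsto_norm_cocompact_atTop.const_mul_atTop (norm_pos_iff.2 hw)

theorem abs_arg_mul_ofReal_le {w : ℂ} {α : ℝ} (hα : 0 ≤ α) (hw : |arg w| ≤ α) (t : ℝ) :
    |arg (w * t)| ≤ α ∨ |arg (-(w * t))| ≤ α := by
  rcases lt_trichotomy t 0 with ht | rfl | ht
  · right
    rwa [show -(w * t) = ((-t : ℝ) : ℂ) * w by push_cast; ring, arg_real_mul w (neg_pos.2 ht)]
  · simpa using hα
  · left
    rwa [mul_comm, arg_real_mul w ht]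

theorem tendsto_comp_mul_ofReal_of_sector_decay {f : ℂ → ℂ} {α C c κ : ℝ} (hc : 0 < c)
    (hκ : 0 < κ) (hα : 0 ≤ α)
    (hf : ∀ z, (|arg z| ≤ α ∨ |arg (-z)| ≤ α) → ‖f z‖ ≤ C * exp (-c * ‖z‖ ^ κ))
    {w : ℂ} (hw : w ≠ 0) (hwα : |arg w| ≤ α) :
    Tendsto (fun t : ℝ => f (w * t)) (cocompact ℝ) (𝓝 0) :=
  tendsto_zero_of_norm_le_mul_exp_neg_rpow hc hκ (tendsto_norm_mul_ofReal_cocompact hw)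
    fun t => hf _ (abs_arg_mul_ofReal_le hα hwα t)

theorem arg_exp_mul_I_of_abs_lt {θ : ℝ} (hθ : |θ| < π) : arg (exp (θ * I)) = θ := by
  rw [arg_exp_mul_I, toIocMod_eq_self, show -π + 2 * π = π by ring]
  exact ⟨(abs_lt.mp hθ).1, (abs_lt.mp hθ).2.le⟩

theorem Differentiable.eq_zero_of_forall_mul_ofReal_eq_zero {u : ℂ → ℂ} (hu : Differentiable ℂ u)
    {w : ℂ} (hw : w ≠ 0) (h : ∀ t : ℝ, u (w * t) = 0) : u = 0 := by
  have hray : Tendsto (fun t : ℝ => w * t) (𝓝[≠] 0) (𝓝[≠] 0) := by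
    refine tendsto_nhdsWithin_of_tendsto_nhds_of_eventually_within _ ?_ ?_
    · have : Tendsto (fun t : ℝ => w * t) (𝓝 0) (𝓝 (w * (0 : ℝ))) :=
        (continuous_const.mul continuous_ofReal).tendsto 0
      simpa using this.mono_left nhdsWithin_le_nhds
    · exact eventually_nhdsWithin_of_forall fun t ht => mul_ne_zero hw (ofReal_ne_zero.2 ht)
  funext z
  exact (analyticOnNhd_univ_iff_differentiable.2 hu).eqOn_zero_of_preconnected_of_frequently_eq_zero
    isPreconnected_univ (Set.mem_univ 0) (hray.frequently (Frequently.of_forall h)) (Set.mem_univ z)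

theorem exp_mul_I_pow (θ : ℝ) (m : ℕ) : exp (θ * I) ^ m = exp (↑(m * θ) * I) := by
  rw [← Complex.exp_nat_mul]
  push_cast
  ring_nf

theorem mul_im_exp_mul_I_pow {σ : ℝ} (hσ : σ = 1 ∨ σ = -1) (θ : ℝ) (m : ℕ) :
    σ * (exp (↑(σ * θ) * I) ^ m).im = Real.sin (m * θ) := by
  rw [exp_mul_I_pow, exp_ofReal_mul_I_im]
  rcases hσ with rfl | rfl <;> simp

theorem im_I_pow_odd_mul_exp_mul_I (n : ℕ) (y : ℝ) :
    (I ^ (2 * n + 1) * exp (y * I)).im = (-1) ^ n * Real.cos y := by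
  rw [pow_succ, pow_mul, I_sq, show (-1 : ℂ) ^ n = ((-1 : ℝ) ^ n : ℝ) by push_cast; rfl]
  simp only [mul_im, mul_re, ofReal_re, ofReal_im, I_re, I_im, exp_ofReal_mul_I_re,
    exp_ofReal_mul_I_im]
  ring

theorem abs_im_le_tan_mul_re {z : ℂ} {β : ℝ} (hβ : 0 < Real.cos β)
    (h : ∀ σ : ℝ, σ = 1 ∨ σ = -1 → 0 ≤ σ * (z * exp (↑(σ * β) * I)).im) :
    |z.im| ≤ Real.tan β * z.re := by
  have h₁ := h 1 (.inl rfl)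
  have h₂ := h (-1) (.inr rfl)
  simp only [one_mul, neg_one_mul, mul_im, exp_ofReal_mul_I_re, exp_ofReal_mul_I_im,
    Real.cos_neg, Real.sin_neg] at h₁ h₂
  rw [Real.tan_eq_sin_div_cos, div_mul_eq_mul_div, le_div_iff₀ hβ]
  rcases abs_cases z.im with ⟨h, -⟩ | ⟨h, -⟩ <;> rw [h] <;> linarith

theorem abs_arg_exp_sector {σ : ℝ} (hσ : σ = 1 ∨ σ = -1) (n : ℕ) :
    |arg (exp (↑(σ * (π / (2 * (2 * n + 3)))) * I))| = π / (2 * (2 * n + 3)) := by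
  have hσα : |σ * (π / (2 * (2 * n + 3)))| = π / (2 * (2 * n + 3)) := by
    rcases hσ with rfl | rfl <;> simp [abs_of_pos (by positivity : 0 < π / (2 * (2 * n + 3)))]
  have hlt : π / (2 * (2 * n + 3)) < π :=
    div_lt_self pi_pos (by linarith [n.cast_nonneg (α := ℝ)])
  rw [arg_exp_mul_I_of_abs_lt (by rwa [hσα]), hσα]

theorem mul_im_exp_sector_pow_nonneg {σ : ℝ} (hσ : σ = 1 ∨ σ = -1) {k n : ℕ} (hk : k ≤ n) :
    0 ≤ σ * (exp (↑(σ * (π / (2 * (2 * n + 3)))) * I) ^ (2 * k + 2)).im := by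
  rw [mul_im_exp_mul_I_pow hσ]
  refine sin_nonneg_of_nonneg_of_le_pi (by positivity) ?_
  rw [mul_div_assoc', div_le_iff₀ (by positivity)]
  have : (k : ℝ) ≤ n := by exact_mod_cast hk
  push_cast
  nlinarith [pi_pos]

theorem im_I_pow_mul_exp_sector_pow_eq_zero {σ : ℝ} (hσ : σ = 1 ∨ σ = -1) (n : ℕ) :
    (I ^ (2 * n + 1) * exp (↑(σ * (π / (2 * (2 * n + 3)))) * I) ^ (2 * n + 3)).im = 0 := by
  have : ((2 * n + 3 : ℕ) : ℝ) * (σ * (π / (2 * (2 * n + 3)))) = σ * (π / 2) := by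
    push_cast
    field_simp
  rw [exp_mul_I_pow, im_I_pow_odd_mul_exp_mul_I, this]
  rcases hσ with rfl | rfl <;> simp

section Ray

variable {u Q : ℂ → ℂ} {w : ℂ}

theorem hasDerivAt_comp_mul_ofReal (hu : Differentiable ℂ u) (t : ℝ) :
    HasDerivAt (fun s : ℝ => u (w * s)) (w * deriv u (w * t)) t := by
  have hray : HasDerivAt (fun s : ℝ => w * (s : ℂ)) w t := by
    simpa using (hasDerivAt_id (t : ℂ)).comp_ofReal.const_mul w
  exact ((hu (w * t)).hasDerivAt.comp t hray).congr_deriv (mul_comm _ _)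

theorem hasDerivAt_conj_mul_deriv_comp_mul_ofReal (hu : Differentiable ℂ u)
    (hode : ∀ z, iteratedDeriv 2 u z = Q z * u z) (t : ℝ) :
    HasDerivAt (fun s : ℝ => conj (u (w * s)) * (w * deriv u (w * s)))
      (‖w * deriv u (w * t)‖ ^ 2 + w ^ 2 * Q (w * t) * ‖u (w * t)‖ ^ 2) t := by
  have hu' : Differentiable ℂ (deriv u) := fun z =>
    ((analyticOnNhd_univ_iff_differentiable.2 hu).deriv z trivial).differentiableAt
  have hu'' : deriv (deriv u) (w * t) = Q (w * t) * u (w * t) := by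
    rw [← hode, iteratedDeriv_succ, iteratedDeriv_one]
  refine ((hasDerivAt_comp_mul_ofReal hu t).star.mul
    ((hasDerivAt_comp_mul_ofReal hu' t).const_mul w)).congr_deriv ?_
  rw [hu'', ← conj_mul', ← conj_mul']
  simp only [star_def, map_mul]
  ring

theorem eq_zero_of_nonneg_of_le_apply_energy (hu : Differentiable ℂ u)
    (hode : ∀ z, iteratedDeriv 2 u z = Q z * u z)
    (hlim : Tendsto (fun t : ℝ => u (w * t)) (cocompact ℝ) (𝓝 0))
    (hlim' : Tendsto (fun t : ℝ => deriv u (w * t)) (cocompact ℝ) (𝓝 0))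
    (L : ℂ →L[ℝ] ℝ) {m : ℝ → ℝ} (hm : ∀ t, 0 ≤ m t)
    (hmL : ∀ t, m t ≤ L (‖w * deriv u (w * t)‖ ^ 2 + w ^ 2 * Q (w * t) * ‖u (w * t)‖ ^ 2))
    (t : ℝ) : m t = 0 := by
  have hG : Tendsto (fun s : ℝ => conj (u (w * s)) * (w * deriv u (w * s))) (cocompact ℝ)
      (𝓝 0) := by
    simpa using ((continuous_conj.tendsto 0).comp hlim).mul (hlim'.const_mul w)
  have hD := deriv_eq_zero_of_nonneg_of_tendsto_cocompact
    (fun s => L.hasFDerivAt.comp_hasDerivAt s (hasDerivAt_conj_mul_deriv_comp_mul_ofReal hu hode s))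
    (fun s => (hm s).trans (hmL s)) (L.map_zero ▸ (L.continuous.tendsto 0).comp hG) t
  linarith [hm t, hmL t]

end Ray

def shiftedPotential (n : ℕ) (a : ℕ → ℝ) (lam z : ℂ) : ℂ :=
  (∑ k ∈ Finset.range (n + 1), (a k : ℂ) * (z ^ 2) ^ k) - (I * z) ^ (2 * n + 1) - lam

section Eigenfunction

variable {n : ℕ} {a : ℕ → ℝ} {lam w : ℂ} {u : ℂ → ℂ}

theorem sq_mul_shiftedPotential_mul_ofReal (t : ℝ) :
    w ^ 2 * shiftedPotential n a lam (w * t) =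
      ∑ k ∈ Finset.range (n + 1), (a k * t ^ (2 * k)) • w ^ (2 * k + 2)
        - t ^ (2 * n + 1) • (I ^ (2 * n + 1) * w ^ (2 * n + 3)) - lam * w ^ 2 := by
  simp only [shiftedPotential, real_smul, mul_sub, Finset.mul_sum, mul_comm (w ^ 2) lam]
  congr 2
  · refine Finset.sum_congr rfl fun k _ => ?_
    push_cast
    ring
  · push_cast
    ring

theorem neg_apply_le_apply_sq_mul_shiftedPotential (ha : ∀ k ≤ n, 0 ≤ a k) (L : ℂ →L[ℝ] ℝ)
    (hpow : ∀ k ≤ n, 0 ≤ L (w ^ (2 * k + 2)))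
    (hodd : L (I ^ (2 * n + 1) * w ^ (2 * n + 3)) = 0) (t : ℝ) :
    -L (lam * w ^ 2) ≤ L (w ^ 2 * shiftedPotential n a lam (w * t)) := by
  have hsum : 0 ≤ ∑ k ∈ Finset.range (n + 1), L ((a k * t ^ (2 * k)) • w ^ (2 * k + 2)) := by
    refine Finset.sum_nonneg fun k hk => ?_
    have hk : k ≤ n := Nat.lt_succ_iff.mp (Finset.mem_range.mp hk)
    rw [map_smul, smul_eq_mul, pow_mul]
    exact mul_nonneg (mul_nonneg (ha k hk) (pow_nonneg (sq_nonneg t) k)) (hpow k hk)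
  rw [sq_mul_shiftedPotential_mul_ofReal, map_sub, map_sub, map_sum, map_smul, hodd, smul_zero]
  linarith

theorem ray_energy_eq_zero (ha : ∀ k ≤ n, 0 ≤ a k) (hu : Differentiable ℂ u)
    (hode : ∀ z, iteratedDeriv 2 u z = shiftedPotential n a lam z * u z)
    (hlim : Tendsto (fun t : ℝ => u (w * t)) (cocompact ℝ) (𝓝 0))
    (hlim' : Tendsto (fun t : ℝ => deriv u (w * t)) (cocompact ℝ) (𝓝 0))
    (L : ℂ →L[ℝ] ℝ) (hL : 0 ≤ L 1) (hpow : ∀ k ≤ n, 0 ≤ L (w ^ (2 * k + 2)))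
    (hodd : L (I ^ (2 * n + 1) * w ^ (2 * n + 3)) = 0) (hlam : L (lam * w ^ 2) ≤ 0) (t : ℝ) :
    ‖w * deriv u (w * t)‖ ^ 2 * L 1 - L (lam * w ^ 2) * ‖u (w * t)‖ ^ 2 = 0 := by
  refine eq_zero_of_nonneg_of_le_apply_energy hu hode hlim hlim' L
    (m := fun t => ‖w * deriv u (w * t)‖ ^ 2 * L 1 - L (lam * w ^ 2) * ‖u (w * t)‖ ^ 2)
    (fun s => ?_) (fun s => ?_) t
  · nlinarith [sq_nonneg ‖w * deriv u (w * s)‖, sq_nonneg ‖u (w * s)‖]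
  · have hQ := neg_apply_le_apply_sq_mul_shiftedPotential (lam := lam) ha L hpow hodd s
    rw [map_add, ← mul_one ((‖w * deriv u (w * s)‖ : ℂ) ^ 2), mul_comm (w ^ 2 * _),
      ← ofReal_pow, ← ofReal_pow, ← real_smul, ← real_smul, map_smul, map_smul, smul_eq_mul,
      smul_eq_mul]
    nlinarith [sq_nonneg ‖u (w * s)‖]

theorem apply_lam_mul_sq_nonneg (ha : ∀ k ≤ n, 0 ≤ a k) (hu : Differentiable ℂ u) (hu₀ : u ≠ 0)
    (hode : ∀ z, iteratedDeriv 2 u z = shiftedPotential n a lam z * u z) (hw : w ≠ 0)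
    (hlim : Tendsto (fun t : ℝ => u (w * t)) (cocompact ℝ) (𝓝 0))
    (hlim' : Tendsto (fun t : ℝ => deriv u (w * t)) (cocompact ℝ) (𝓝 0))
    (L : ℂ →L[ℝ] ℝ) (hL : 0 ≤ L 1) (hpow : ∀ k ≤ n, 0 ≤ L (w ^ (2 * k + 2)))
    (hodd : L (I ^ (2 * n + 1) * w ^ (2 * n + 3)) = 0) : 0 ≤ L (lam * w ^ 2) := by
  by_contra! hlam
  refine hu₀ (hu.eq_zero_of_forall_mul_ofReal_eq_zero hw fun t => ?_)
  have h := ray_energy_eq_zero ha hu hode hlim hlim' L hL hpow hodd hlam.le t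
  have : ‖u (w * t)‖ ^ 2 = 0 := by
    nlinarith [mul_nonneg (sq_nonneg ‖w * deriv u (w * t)‖) hL, sq_nonneg ‖u (w * t)‖]
  simpa using this

theorem re_pos_of_eigenfunction (ha : ∀ k ≤ n, 0 ≤ a k) (hu : Differentiable ℂ u) (hu₀ : u ≠ 0)
    (hode : ∀ z, iteratedDeriv 2 u z = shiftedPotential n a lam z * u z)
    (hlim : Tendsto (fun t : ℝ => u (1 * t)) (cocompact ℝ) (𝓝 0))
    (hlim' : Tendsto (fun t : ℝ => deriv u (1 * t)) (cocompact ℝ) (𝓝 0)) : 0 < lam.re := by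
  by_contra! hlam
  have hpow : ∀ k ≤ n, 0 ≤ reCLM (1 ^ (2 * k + 2)) := by simp
  have hodd : reCLM (I ^ (2 * n + 1) * 1 ^ (2 * n + 3)) = 0 := by
    rcases neg_one_pow_eq_or ℂ n with h | h <;> simp [pow_succ, pow_mul, h]
  have hderiv (t : ℝ) : deriv u (1 * t) = 0 := by
    have h := ray_energy_eq_zero ha hu hode hlim hlim' reCLM (by simp) hpow hodd
      (by simpa using hlam) t
    simp only [one_mul, reCLM_apply, one_re, mul_one, one_pow] at h
    have : ‖deriv u t‖ ^ 2 = 0 := by nlinarith [sq_nonneg ‖deriv u t‖, sq_nonneg ‖u t‖]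
    simpa using this
  have hconst (t : ℝ) : HasDerivAt (fun s : ℝ => u (1 * s)) 0 t :=
    (hasDerivAt_comp_mul_ofReal hu t).congr_deriv (by rw [hderiv t, mul_zero])
  exact hu₀ (hu.eq_zero_of_forall_mul_ofReal_eq_zero one_ne_zero
    (eq_zero_of_hasDerivAt_zero_of_tendsto_cocompact hconst hlim))

theorem mul_im_mul_exp_sector_nonneg {σ : ℝ} (hσ : σ = 1 ∨ σ = -1) (ha : ∀ k ≤ n, 0 ≤ a k)
    (hu : Differentiable ℂ u) (hu₀ : u ≠ 0)
    (hode : ∀ z, iteratedDeriv 2 u z = shiftedPotential n a lam z * u z)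
    (hlim : Tendsto (fun t : ℝ => u (exp (↑(σ * (π / (2 * (2 * n + 3)))) * I) * t))
      (cocompact ℝ) (𝓝 0))
    (hlim' : Tendsto (fun t : ℝ => deriv u (exp (↑(σ * (π / (2 * (2 * n + 3)))) * I) * t))
      (cocompact ℝ) (𝓝 0)) :
    0 ≤ σ * (lam * exp (↑(σ * (π / (2 * n + 3))) * I)).im := by
  have h := apply_lam_mul_sq_nonneg ha hu hu₀ hode (exp_ne_zero _) hlim hlim' (σ • imCLM)
    (by simp) (fun k hk => mul_im_exp_sector_pow_nonneg hσ hk)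
    (by rw [smul_apply, imCLM_apply, im_I_pow_mul_exp_sector_pow_eq_zero hσ, smul_zero])
  have hβ : ((2 : ℕ) : ℝ) * (σ * (π / (2 * (2 * n + 3)))) = σ * (π / (2 * n + 3)) := by
    push_cast
    field_simp
  rwa [smul_apply, imCLM_apply, smul_eq_mul, exp_mul_I_pow, hβ] at h

end Eigenfunction

theorem eigenvalues_lie_in_sector_general
    (n : ℕ) (a : ℕ → ℝ) (ha : ∀ k, k ≤ n → 0 ≤ a k)
    (lam : ℂ) (u : ℂ → ℂ)
    (hu_entire : Differentiable ℂ u)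
    (hu_ne : u ≠ 0)
    (hode : ∀ z : ℂ, iteratedDeriv 2 u z =
      ((∑ k ∈ Finset.range (n + 1), (a k : ℂ) * (z ^ 2) ^ k)
        - (Complex.I * z) ^ (2 * n + 1) - lam) * u z)
    (hdecay : ∃ C > (0 : ℝ), ∃ c > (0 : ℝ), ∃ κ > (0 : ℝ), ∀ z : ℂ,
      (|Complex.arg z| ≤ π / (2 * (2 * (n : ℝ) + 3)) ∨
        |Complex.arg (-z)| ≤ π / (2 * (2 * (n : ℝ) + 3))) →
      ‖u z‖ + ‖deriv u z‖
        ≤ C * Real.exp (-c * ‖z‖ ^ κ)) :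
    lam ≠ 0 ∧ 0 < lam.re ∧ |lam.im| ≤ Real.tan (π / (2 * (n : ℝ) + 3)) * lam.re := by
  obtain ⟨C, -, c, hc, κ, hκ, hdec⟩ := hdecay
  have hα : 0 ≤ π / (2 * (2 * (n : ℝ) + 3)) := by positivity
  have hray (w : ℂ) (hw : w ≠ 0) (hwα : |arg w| ≤ π / (2 * (2 * (n : ℝ) + 3))) :
      Tendsto (fun t : ℝ => u (w * t)) (cocompact ℝ) (𝓝 0) ∧
        Tendsto (fun t : ℝ => deriv u (w * t)) (cocompact ℝ) (𝓝 0) :=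
    ⟨tendsto_comp_mul_ofReal_of_sector_decay hc hκ hα
      (fun z hz => (le_add_of_nonneg_right (norm_nonneg _)).trans (hdec z hz)) hw hwα,
     tendsto_comp_mul_ofReal_of_sector_decay hc hκ hα
      (fun z hz => (le_add_of_nonneg_left (norm_nonneg _)).trans (hdec z hz)) hw hwα⟩
  have hre : 0 < lam.re := by
    obtain ⟨hlim, hlim'⟩ := hray 1 one_ne_zero (by simpa using hα)
    exact re_pos_of_eigenfunction ha hu_entire hu_ne hode hlim hlim'
  have hside (σ : ℝ) (hσ : σ = 1 ∨ σ = -1) :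
      0 ≤ σ * (lam * exp (↑(σ * (π / (2 * n + 3))) * I)).im := by
    obtain ⟨hlim, hlim'⟩ := hray _ (exp_ne_zero _) (abs_arg_exp_sector hσ n).le
    exact mul_im_mul_exp_sector_nonneg hσ ha hu_entire hu_ne hode hlim hlim'
  have hcos : 0 < Real.cos (π / (2 * n + 3)) := by
    have : π / (2 * n + 3) < π / 2 := div_lt_div_of_pos_left pi_pos two_pos (by linarith)
    exact cos_pos_of_mem_Ioo ⟨by linarith [pi_pos, (by positivity : 0 < π / (2 * n + 3))], this⟩
  exact ⟨fun h => by simp [h] at hre, hre, abs_im_le_tan_mul_re hcos hside⟩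

/-- If `lam` is an eigenvalue of
`-u'' + (P(x²) - (ix)^{2n+1}) u = lam·u`, where `P(X) = ∑_{k=0}^n a_k X^k` has all
nonnegative real coefficients and `n ≥ 1`, then `lam ≠ 0`, `Re lam > 0` and
`|arg lam| ≤ π/(2n+3)`, i.e. `|Im lam| ≤ tan(π/(2n+3)) · Re lam`. -/
theorem eigenvalues_lie_in_sector
    (n : ℕ) (hn : 1 ≤ n) (a : ℕ → ℝ) (ha : ∀ k, k ≤ n → 0 ≤ a k)
    (lam : ℂ) (u : ℂ → ℂ)
    (hu_entire : Differentiable ℂ u)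
    (hu_ne : u ≠ 0)
    (hode : ∀ z : ℂ, iteratedDeriv 2 u z =
      ((∑ k ∈ Finset.range (n + 1), (a k : ℂ) * (z ^ 2) ^ k)
        - (Complex.I * z) ^ (2 * n + 1) - lam) * u z)
    (hdecay : ∃ C > (0 : ℝ), ∃ c > (0 : ℝ), ∃ κ > (0 : ℝ), ∀ z : ℂ,
      (|Complex.arg z| ≤ π / (2 * (2 * (n : ℝ) + 3)) ∨
        |Complex.arg (-z)| ≤ π / (2 * (2 * (n : ℝ) + 3))) →
      ‖u z‖ + ‖deriv u z‖
        ≤ C * Real.exp (-c * ‖z‖ ^ κ)) :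
    lam ≠ 0 ∧ 0 < lam.re ∧ |lam.im| ≤ Real.tan (π / (2 * (n : ℝ) + 3)) * lam.re :=
  eigenvalues_lie_in_sector_general n a ha lam u hu_entire hu_ne hode hdecay
end

section
/- (Green's transform.) Let z : [c, d] → ℂ be a continuously differentiable curve with z'(t) ≠ 0 for all t ∈ [c, d], written z(t) = x(t) + i·y(t) with x, y real-valued. Then: (1) Re(u'(z(d))·conj(u(z(d)))) − Re(u'(z(c))·conj(u(z(c)))) = ∫_c^d x'(t)·|u'(z(t))|² dt + ∫_c^d [x'(t)·Re(i·z(t)³ − λ) − y'(t)·Im(i·z(t)³ − λ)]·|u(z(t))|² dt; and (2) Im(u'(z(d))·conj(u(z(d)))) − Im(u'(z(c))·conj(u(z(c)))) = −∫_c^d y'(t)·|u'(z(t))|² dt + ∫_c^d [y'(t)·Re(i·z(t)³ − λ) + x'(t)·Im(i·z(t)³ − λ)]·|u(z(t))|² dt. -/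
open Complex Real ComplexConjugate

open Set MeasureTheory intervalIntegral

/-! Along the curve, `F t = u'(z t) · conj (u (z t))` has derivative
`z' · u''(z) · conj u(z) + conj z' · |u'(z)|²`, and the equation `u'' = Q u` turns the first term
into `z' · Q(z) · |u(z)|²`. Integrating `F'` over `[c, d]` and taking real and imaginary parts
gives the two identities. -/

theorem hasDerivAt_deriv_comp_mul_conj_comp {u : ℂ → ℂ} {z : ℝ → ℂ} {z' : ℂ} {t : ℝ}
    (hu : DifferentiableAt ℂ u (z t)) (hu' : DifferentiableAt ℂ (deriv u) (z t))
    (hz : HasDerivAt z z' t) :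
    HasDerivAt (fun s => deriv u (z s) * conj (u (z s)))
      (z' * deriv (deriv u) (z t) * conj (u (z t)) + conj z' * (‖deriv u (z t)‖ ^ 2 : ℝ)) t := by
  have hu_z : HasDerivAt (fun s => u (z s)) (deriv u (z t) * z') t := hu.hasDerivAt.comp t hz
  have hu'_z : HasDerivAt (fun s => deriv u (z s)) (deriv (deriv u) (z t) * z') t :=
    hu'.hasDerivAt.comp t hz
  refine (hu'_z.mul hu_z.star).congr_deriv ?_
  rw [Complex.star_def, map_mul, ofReal_pow, ← mul_conj']
  ring

section GreensTransform

variable {u Q : ℂ → ℂ} {c d : ℝ} {z z' : ℝ → ℂ}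

theorem intervalIntegrable_conj_mul_sq_norm_deriv_comp (hu : Differentiable ℂ u) (hcd : c ≤ d)
    (hz : ∀ t ∈ Icc c d, HasDerivAt z (z' t) t) (hz' : ContinuousOn z' (Icc c d)) :
    IntervalIntegrable (fun t => conj (z' t) * (‖deriv u (z t)‖ ^ 2 : ℝ)) volume c d := by
  have hzc : ContinuousOn z (Icc c d) := fun t ht => (hz t ht).continuousAt.continuousWithinAt
  have := hu.deriv.continuous
  exact ContinuousOn.intervalIntegrable_of_Icc hcd (by fun_prop)

theorem intervalIntegrable_mul_comp_mul_sq_norm_comp (hu : Differentiable ℂ u)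
    (hQ : Continuous Q) (hcd : c ≤ d) (hz : ∀ t ∈ Icc c d, HasDerivAt z (z' t) t)
    (hz' : ContinuousOn z' (Icc c d)) :
    IntervalIntegrable (fun t => z' t * Q (z t) * (‖u (z t)‖ ^ 2 : ℝ)) volume c d := by
  have hzc : ContinuousOn z (Icc c d) := fun t ht => (hz t ht).continuousAt.continuousWithinAt
  have := hu.continuous
  exact ContinuousOn.intervalIntegrable_of_Icc hcd (by fun_prop)

theorem deriv_mul_conj_comp_sub_eq_integral (hu : Differentiable ℂ u) (hQ : Continuous Q)
    (hode : ∀ w, deriv (deriv u) w = Q w * u w) (hcd : c ≤ d)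
    (hz : ∀ t ∈ Icc c d, HasDerivAt z (z' t) t) (hz' : ContinuousOn z' (Icc c d)) :
    deriv u (z d) * conj (u (z d)) - deriv u (z c) * conj (u (z c))
      = (∫ t in c..d, conj (z' t) * (‖deriv u (z t)‖ ^ 2 : ℝ))
        + ∫ t in c..d, z' t * Q (z t) * (‖u (z t)‖ ^ 2 : ℝ) := by
  have hA := intervalIntegrable_conj_mul_sq_norm_deriv_comp hu hcd hz hz'
  have hB := intervalIntegrable_mul_comp_mul_sq_norm_comp hu hQ hcd hz hz'
  rw [← integral_add hA hB, eq_comm]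
  refine integral_eq_sub_of_hasDerivAt (f := fun s => deriv u (z s) * conj (u (z s)))
    (fun t ht => ?_) (hA.add hB)
  rw [uIcc_of_le hcd] at ht
  refine (hasDerivAt_deriv_comp_mul_conj_comp (hu _) (hu.deriv _) (hz t ht)).congr_deriv ?_
  simp only [hode, ofReal_pow, ← mul_conj']
  ring

theorem greens_transform_of_iteratedDeriv_two_eq (hu : Differentiable ℂ u) (hQ : Continuous Q)
    (hode : ∀ w, iteratedDeriv 2 u w = Q w * u w) (hcd : c ≤ d)
    (hz : ∀ t ∈ Icc c d, HasDerivAt z (z' t) t) (hz' : ContinuousOn z' (Icc c d)) :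
    ((deriv u (z d) * conj (u (z d))).re - (deriv u (z c) * conj (u (z c))).re
      = (∫ t in c..d, (z' t).re * ‖deriv u (z t)‖ ^ 2)
        + ∫ t in c..d, ((z' t).re * (Q (z t)).re - (z' t).im * (Q (z t)).im) * ‖u (z t)‖ ^ 2) ∧
    ((deriv u (z d) * conj (u (z d))).im - (deriv u (z c) * conj (u (z c))).im
      = -(∫ t in c..d, (z' t).im * ‖deriv u (z t)‖ ^ 2)
        + ∫ t in c..d, ((z' t).im * (Q (z t)).re + (z' t).re * (Q (z t)).im) * ‖u (z t)‖ ^ 2) := by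
  have hA := intervalIntegrable_conj_mul_sq_norm_deriv_comp hu hcd hz hz'
  have hB := intervalIntegrable_mul_comp_mul_sq_norm_comp hu hQ hcd hz hz'
  have hode' : ∀ w, deriv (deriv u) w = Q w * u w := by
    simpa [iteratedDeriv_eq_iterate] using hode
  have key := deriv_mul_conj_comp_sub_eq_integral hu hQ hode' hcd hz hz'
  constructor
  · rw [← sub_re, key, add_re, ← RCLike.re_to_complex, ← RCLike.re_to_complex,
      ← intervalIntegral_re hA, ← intervalIntegral_re hB]
    simp only [RCLike.re_to_complex, re_mul_ofReal, conj_re]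
    simp only [mul_re]
  · rw [← sub_im, key, add_im, ← RCLike.im_to_complex, ← RCLike.im_to_complex,
      ← intervalIntegral_im hA, ← intervalIntegral_im hB]
    simp only [RCLike.im_to_complex, im_mul_ofReal, conj_im, neg_mul, intervalIntegral.integral_neg]
    simp only [mul_im]
    congr 2
    funext t
    ring

end GreensTransform

theorem greens_transform_general
    (lam : ℂ) (u : ℂ → ℂ)
    (hu_entire : Differentiable ℂ u)
    (hode : ∀ w : ℂ, iteratedDeriv 2 u w = (Complex.I * w ^ 3 - lam) * u w)
    (c d : ℝ) (hcd : c ≤ d) (z z' : ℝ → ℂ)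
    (hz : ∀ t ∈ Set.Icc c d, HasDerivAt z (z' t) t)
    (hz' : ContinuousOn z' (Set.Icc c d)) :
    ((deriv u (z d) * conj (u (z d))).re - (deriv u (z c) * conj (u (z c))).re
      = (∫ t in c..d, (z' t).re * ‖deriv u (z t)‖ ^ 2)
        + ∫ t in c..d,
            ((z' t).re * (Complex.I * (z t) ^ 3 - lam).re
              - (z' t).im * (Complex.I * (z t) ^ 3 - lam).im)
            * ‖u (z t)‖ ^ 2) ∧
    ((deriv u (z d) * conj (u (z d))).im - (deriv u (z c) * conj (u (z c))).im
      = -(∫ t in c..d, (z' t).im * ‖deriv u (z t)‖ ^ 2)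
        + ∫ t in c..d,
            ((z' t).im * (Complex.I * (z t) ^ 3 - lam).re
              + (z' t).re * (Complex.I * (z t) ^ 3 - lam).im)
            * ‖u (z t)‖ ^ 2) :=
  greens_transform_of_iteratedDeriv_two_eq hu_entire (by fun_prop) hode hcd hz hz'

/-- **Green's transform.** Let `u` be entire with
`u''(z) = (iz³ - lam)·u(z)`, and let `z : [c,d] → ℂ` be a continuously differentiable
curve with nonvanishing derivative `z'`.  Writing `z(t) = x(t) + i y(t)`, one has
`Re(u'·conj u)|_{z(c)}^{z(d)} = ∫_c^d x'|u'(z(t))|² dt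
  + ∫_c^d [x'·Re(iz³-lam) - y'·Im(iz³-lam)]·|u(z(t))|² dt`
and
`Im(u'·conj u)|_{z(c)}^{z(d)} = -∫_c^d y'|u'(z(t))|² dt
  + ∫_c^d [y'·Re(iz³-lam) + x'·Im(iz³-lam)]·|u(z(t))|² dt`. -/
theorem greens_transform
    (lam : ℂ) (u : ℂ → ℂ)
    (hu_entire : Differentiable ℂ u)
    (hode : ∀ w : ℂ, iteratedDeriv 2 u w = (Complex.I * w ^ 3 - lam) * u w)
    (c d : ℝ) (hcd : c ≤ d) (z z' : ℝ → ℂ)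
    (hz : ∀ t ∈ Set.Icc c d, HasDerivAt z (z' t) t)
    (hz' : ContinuousOn z' (Set.Icc c d))
    (hz0 : ∀ t ∈ Set.Icc c d, z' t ≠ 0) :
    ((deriv u (z d) * conj (u (z d))).re - (deriv u (z c) * conj (u (z c))).re
      = (∫ t in c..d, (z' t).re * ‖deriv u (z t)‖ ^ 2)
        + ∫ t in c..d,
            ((z' t).re * (Complex.I * (z t) ^ 3 - lam).re
              - (z' t).im * (Complex.I * (z t) ^ 3 - lam).im)
            * ‖u (z t)‖ ^ 2) ∧
    ((deriv u (z d) * conj (u (z d))).im - (deriv u (z c) * conj (u (z c))).im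
      = -(∫ t in c..d, (z' t).im * ‖deriv u (z t)‖ ^ 2)
        + ∫ t in c..d,
            ((z' t).im * (Complex.I * (z t) ^ 3 - lam).re
              + (z' t).re * (Complex.I * (z t) ^ 3 - lam).im)
            * ‖u (z t)‖ ^ 2) :=
  greens_transform_general lam u hu_entire hode c d hcd z z' hz hz'
end

section
/- Write λ = α + iβ with α, β ∈ ℝ. For all real x and y: (1) the partial derivative in x of Im(u'(x+iy)·conj(u(x+iy))) equals (x³ − 3xy² − β)·|u(x+iy)|²; and (2) the partial derivative in x of Re(u'(x+iy)·conj(u(x+iy))) equals |u'(x+iy)|² + (y³ − 3x²y − α)·|u(x+iy)|². -/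
/-!
Along the horizontal line `s ↦ s + iy` the product rule gives
`(u' ū)' = u'' ū + |u'|² = (iz³ - λ)|u|² + |u'|²`, and the real and imaginary parts of
`i(x + iy)³` are `y³ - 3x²y` and `x³ - 3xy²`.
-/

open Complex ComplexConjugate

theorem HasDerivAt.complex_re {f : ℝ → ℂ} {f' : ℂ} {x : ℝ} (hf : HasDerivAt f f' x) :
    HasDerivAt (fun s => (f s).re) f'.re x :=
  reCLM.hasFDerivAt.comp_hasDerivAt x hf

theorem HasDerivAt.complex_im {f : ℝ → ℂ} {f' : ℂ} {x : ℝ} (hf : HasDerivAt f f' x) :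
    HasDerivAt (fun s => (f s).im) f'.im x :=
  imCLM.hasFDerivAt.comp_hasDerivAt x hf

theorem HasDerivAt.comp_ofReal_add_const {f : ℂ → ℂ} {f' : ℂ} {x : ℝ} {c : ℂ}
    (hf : HasDerivAt f f' (x + c)) :
    HasDerivAt (fun s : ℝ => f (s + c)) f' x :=
  (hf.comp_add_const (x : ℂ) c).comp_ofReal

theorem hasDerivAt_deriv_mul_conj_comp_ofReal_add_const {u : ℂ → ℂ} (hu : Differentiable ℂ u)
    (x : ℝ) (c : ℂ) :
    HasDerivAt (fun s : ℝ => deriv u (s + c) * conj (u (s + c)))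
      (iteratedDeriv 2 u (x + c) * conj (u (x + c)) + (‖deriv u (x + c)‖ ^ 2 : ℝ)) x := by
  have hu' : HasDerivAt (deriv u) (iteratedDeriv 2 u (x + c)) (x + c) := by
    rw [iteratedDeriv_succ, iteratedDeriv_one]
    exact (hu.analyticAt (x + c)).deriv.differentiableAt.hasDerivAt
  have hconj : HasDerivAt (fun s : ℝ => conj (u (s + c))) (conj (deriv u (x + c))) x :=
    (hu (x + c)).hasDerivAt.comp_ofReal_add_const.star
  rw [ofReal_pow, ← mul_conj']
  exact hu'.comp_ofReal_add_const.mul hconj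

theorem re_I_mul_cube (x y : ℝ) : (I * (x + y * I) ^ 3).re = y ^ 3 - 3 * x ^ 2 * y := by
  simp only [pow_succ, pow_zero, one_mul, mul_re, mul_im, add_re, add_im, I_re, I_im, ofReal_re,
    ofReal_im]
  ring

theorem im_I_mul_cube (x y : ℝ) : (I * (x + y * I) ^ 3).im = x ^ 3 - 3 * x * y ^ 2 := by
  simp only [pow_succ, pow_zero, one_mul, mul_re, mul_im, add_re, add_im, I_re, I_im, ofReal_re,
    ofReal_im]
  ring

/-- Let `u` be entire with `u''(z) = (iz³ - lam)·u(z)` and write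
`lam = α + iβ`.  Then for all real `x, y`:
`∂/∂x Im(u'(x+iy)·conj u(x+iy)) = (x³ - 3xy² - β)·|u(x+iy)|²` and
`∂/∂x Re(u'(x+iy)·conj u(x+iy)) = |u'(x+iy)|² + (y³ - 3x²y - α)·|u(x+iy)|²`. -/
theorem partial_x_of_wronskian_like_quantities
    (lam : ℂ) (u : ℂ → ℂ)
    (hu_entire : Differentiable ℂ u)
    (hode : ∀ w : ℂ, iteratedDeriv 2 u w = (Complex.I * w ^ 3 - lam) * u w)
    (x y : ℝ) :
    HasDerivAt
      (fun s : ℝ =>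
        (deriv u (s + y * Complex.I) * conj (u (s + y * Complex.I))).im)
      ((x ^ 3 - 3 * x * y ^ 2 - lam.im)
        * ‖u (x + y * Complex.I)‖ ^ 2) x ∧
    HasDerivAt
      (fun s : ℝ =>
        (deriv u (s + y * Complex.I) * conj (u (s + y * Complex.I))).re)
      (‖deriv u (x + y * Complex.I)‖ ^ 2
        + (y ^ 3 - 3 * x ^ 2 * y - lam.re)
          * ‖u (x + y * Complex.I)‖ ^ 2) x := by
  have h := hasDerivAt_deriv_mul_conj_comp_ofReal_add_const hu_entire x (y * I)
  rw [hode, mul_assoc, mul_conj', ← ofReal_pow] at h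
  constructor
  · convert h.complex_im using 1
    simp only [add_im, im_mul_ofReal, ofReal_im, sub_im, im_I_mul_cube, add_zero]
  · convert h.complex_re using 1
    simp only [add_re, re_mul_ofReal, ofReal_re, sub_re, re_I_mul_cube]
    ring
end

section
/- Assume β = Im λ > 0. Then Im(u'(z)·conj(u(z))) < 0 for every z in the set B₁ ∪ {z ∈ B₄ : Re z ≤ −(β/2)^{1/3}} ∪ {z ∉ A₁ : Im z ≥ −(β/2)^{1/3}}. -/
open Complex Real ComplexConjugate

open Filter Set Topology

/-! Put `W = u' ū`. Along a horizontal line `W' = (i z³ - λ) |u|² + |u'|²`, so `Im W` has derivative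
`Im (i z³ - λ) |u|²`, and `W → 0` at both ends of the line. Hence `Im W (z) < 0` as soon as
`Im (i z³ - λ) > 0` on the whole ray to the right of `z` (this is `B₁`), or `Im (i z³ - λ) ≤ 0` on
the whole ray to the left of `z` (the part of `B₄` with `Re z ≤ -(β/2)^{1/3}`, and every `z` with
`|Im z| ≤ (β/2)^{1/3}`); strictness holds because `u` cannot vanish on a segment. The same
argument applied to `Re W` on the real axis shows `α ≥ 0`. Going up a vertical line, `Im W` has
derivative `Re (i z³ - λ) |u|² - |u'|²`, which is `≤ 0` below any point outside `A₁` since `α ≥ 0`;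
this reduces the remaining points above the strip to the real axis. -/

theorem neg_of_hasDerivAt_nonneg_of_tendsto_atTop {f f' : ℝ → ℝ} {x₀ : ℝ}
    (hf : ∀ t, HasDerivAt f (f' t) t) (hf' : ∀ t, x₀ ≤ t → 0 ≤ f' t)
    (hlim : Tendsto f atTop (𝓝 0)) (hne : ∃ t, x₀ < t ∧ f' t ≠ 0) : f x₀ < 0 := by
  have hmono : MonotoneOn f (Ici x₀) :=
    monotoneOn_of_hasDerivWithinAt_nonneg (convex_Ici x₀)
      (fun t _ => (hf t).continuousAt.continuousWithinAt) (fun t _ => (hf t).hasDerivWithinAt)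
      (fun t ht => hf' t (interior_subset ht))
  have hle : ∀ t, x₀ ≤ t → f t ≤ 0 := fun t ht =>
    ge_of_tendsto hlim <| (eventually_ge_atTop t).mono fun s hs => hmono ht (ht.trans hs) hs
  obtain ⟨t, hxt, ht⟩ := hne
  refine (hle x₀ le_rfl).lt_of_ne fun h0 => ht ?_
  have hzero : f =ᶠ[𝓝 t] fun _ => 0 := (eventually_gt_nhds hxt).mono fun s hs =>
    le_antisymm (hle s hs.le) (h0 ▸ hmono (mem_Ici.2 le_rfl) (mem_Ici.2 hs.le) hs.le)
  exact (hf t).unique ((hasDerivAt_const t 0).congr_of_eventuallyEq hzero)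

theorem neg_of_hasDerivAt_nonpos_of_tendsto_atBot {f f' : ℝ → ℝ} {x₀ : ℝ}
    (hf : ∀ t, HasDerivAt f (f' t) t) (hf' : ∀ t ≤ x₀, f' t ≤ 0)
    (hlim : Tendsto f atBot (𝓝 0)) (hne : ∃ t < x₀, f' t ≠ 0) : f x₀ < 0 := by
  obtain ⟨t, htx, ht⟩ := hne
  simpa using neg_of_hasDerivAt_nonneg_of_tendsto_atTop (f := fun s => f (-s))
    (f' := fun s => -f' (-s)) (x₀ := -x₀)
    (fun s => by simpa [Function.comp_def] using (hf (-s)).scomp s (hasDerivAt_neg s))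
    (fun s hs => neg_nonneg.2 (hf' _ (by linarith))) (hlim.comp tendsto_neg_atTop_atBot)
    ⟨-t, by linarith, by simpa using ht⟩

theorem eq_zero_of_hasDerivAt_nonneg_of_tendsto {f f' : ℝ → ℝ}
    (hf : ∀ t, HasDerivAt f (f' t) t) (hf' : 0 ≤ f')
    (hbot : Tendsto f atBot (𝓝 0)) (htop : Tendsto f atTop (𝓝 0)) : f' = 0 := by
  have hmono := monotone_of_hasDerivAt_nonneg hf hf'
  have hzero : f = 0 := funext fun t => le_antisymm
    (ge_of_tendsto htop <| (eventually_ge_atTop t).mono fun _ hs => hmono hs)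
    (le_of_tendsto hbot <| (eventually_le_atBot t).mono fun _ hs => hmono hs)
  exact funext fun t => (hf t).unique (by rw [hzero]; exact hasDerivAt_const t (0 : ℝ))

theorem exists_ne_zero_on_horizontal_segment {F : ℂ → ℂ} (hF : Differentiable ℂ F) (hF0 : F ≠ 0)
    (y : ℝ) {a b : ℝ} (hab : a < b) : ∃ t ∈ Ioo a b, F (t + y * I) ≠ 0 := by
  by_contra! h
  obtain ⟨m, ham, hmb⟩ := exists_between hab
  have hline : Tendsto (fun t : ℝ => (t : ℂ) + y * I) (𝓝[≠] m) (𝓝[≠] (m + y * I)) :=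
    ((continuous_ofReal.add continuous_const).continuousWithinAt).tendsto_nhdsWithin
      fun t ht h => ht (by simpa using h)
  have hfreq : ∃ᶠ w in 𝓝[≠] ((m : ℂ) + y * I), F w = 0 :=
    hline.frequently (eventually_nhdsWithin_of_eventually_nhds
      (eventually_of_mem (Ioo_mem_nhds ham hmb) h)).frequently
  exact hF0 <| funext fun w => (analyticOnNhd_univ_iff_differentiable.2 hF)
    |>.eqOn_zero_of_preconnected_of_frequently_eq_zero isPreconnected_univ (mem_univ _) hfreq
    (mem_univ w)

noncomputable def derivMulConj (u : ℂ → ℂ) (z : ℂ) : ℂ := deriv u z * conj (u z)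

theorem tendsto_derivMulConj_horizontal {u : ℂ → ℂ}
    (hdecay : ∀ M : ℝ, 0 < M → ∃ C₁ > (0 : ℝ), ∃ C₂ > (0 : ℝ), ∀ x y : ℝ, |y| ≤ M →
      ‖u (x + y * I)‖ + ‖deriv u (x + y * I)‖ ≤ C₁ * Real.exp (-(|x| ^ C₂))) (y : ℝ) :
    Tendsto (fun t : ℝ => derivMulConj u (t + y * I)) (cocompact ℝ) (𝓝 0) := by
  obtain ⟨C₁, -, C₂, hC₂, hb⟩ := hdecay (|y| + 1) (by positivity)
  have hb' : ∀ t : ℝ, ‖u (t + y * I)‖ + ‖deriv u (t + y * I)‖ ≤ C₁ * Real.exp (-(|t| ^ C₂)) :=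
    fun t => hb t y (by linarith)
  have hbound : Tendsto (fun t : ℝ => C₁ * Real.exp (-(|t| ^ C₂))) (cocompact ℝ) (𝓝 0) := by
    simpa using (tendsto_exp_neg_atTop_nhds_zero.comp
      ((tendsto_rpow_atTop hC₂).comp (tendsto_norm_cocompact_atTop (E := ℝ)))).const_mul C₁
  have hu_lim : Tendsto (fun t : ℝ => u (t + y * I)) (cocompact ℝ) (𝓝 0) :=
    squeeze_zero_norm (fun t => (le_add_of_nonneg_right (norm_nonneg _)).trans (hb' t)) hbound
  have hu'_lim : Tendsto (fun t : ℝ => deriv u (t + y * I)) (cocompact ℝ) (𝓝 0) :=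
    squeeze_zero_norm (fun t => (le_add_of_nonneg_left (norm_nonneg _)).trans (hb' t)) hbound
  have := hu'_lim.mul ((continuous_conj.tendsto 0).comp hu_lim)
  rwa [map_zero, mul_zero] at this

section Potential

variable {u V : ℂ → ℂ}

theorem hasDerivAt_derivMulConj_comp (hu : Differentiable ℂ u)
    (hV : ∀ w, deriv (deriv u) w = V w * u w) {γ : ℝ → ℂ} {γ' : ℂ} {t : ℝ}
    (hγ : HasDerivAt γ γ' t) :
    HasDerivAt (fun s => derivMulConj u (γ s))
      (γ' * V (γ t) * normSq (u (γ t)) + conj γ' * normSq (deriv u (γ t))) t := by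
  have hu' : HasDerivAt (fun s => u (γ s)) (deriv u (γ t) * γ') t :=
    (hu (γ t)).hasDerivAt.comp t hγ
  have hu'' : HasDerivAt (fun s => deriv u (γ s)) (V (γ t) * u (γ t) * γ') t := by
    rw [← hV]; exact (hu.deriv (γ t)).hasDerivAt.comp t hγ
  refine (hu''.mul hu'.star).congr_deriv ?_
  rw [star_def, map_mul, ← mul_conj, ← mul_conj]
  ring

theorem hasDerivAt_im_derivMulConj_horizontal (hu : Differentiable ℂ u)
    (hV : ∀ w, deriv (deriv u) w = V w * u w) (y t : ℝ) :
    HasDerivAt (fun s : ℝ => (derivMulConj u (s + y * I)).im)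
      ((V (t + y * I)).im * normSq (u (t + y * I))) t := by
  have hγ : HasDerivAt (fun s : ℝ => (s : ℂ) + y * I) 1 t :=
    (hasDerivAt_id t).ofReal_comp.add_const _
  have h := hasDerivAt_derivMulConj_comp hu hV hγ
  refine (imCLM.hasFDerivAt.comp_hasDerivAt t h).congr_deriv ?_
  simp

theorem hasDerivAt_re_derivMulConj_horizontal (hu : Differentiable ℂ u)
    (hV : ∀ w, deriv (deriv u) w = V w * u w) (y t : ℝ) :
    HasDerivAt (fun s : ℝ => (derivMulConj u (s + y * I)).re)
      ((V (t + y * I)).re * normSq (u (t + y * I)) + normSq (deriv u (t + y * I))) t := by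
  have hγ : HasDerivAt (fun s : ℝ => (s : ℂ) + y * I) 1 t :=
    (hasDerivAt_id t).ofReal_comp.add_const _
  have h := hasDerivAt_derivMulConj_comp hu hV hγ
  refine (reCLM.hasFDerivAt.comp_hasDerivAt t h).congr_deriv ?_
  simp

theorem hasDerivAt_im_derivMulConj_vertical (hu : Differentiable ℂ u)
    (hV : ∀ w, deriv (deriv u) w = V w * u w) (x s : ℝ) :
    HasDerivAt (fun r : ℝ => (derivMulConj u (x + r * I)).im)
      ((V (x + s * I)).re * normSq (u (x + s * I)) - normSq (deriv u (x + s * I))) s := by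
  have hγ : HasDerivAt (fun r : ℝ => (x : ℂ) + r * I) I s := by
    simpa using ((hasDerivAt_id s).ofReal_comp.mul_const I).const_add (x : ℂ)
  have h := hasDerivAt_derivMulConj_comp hu hV hγ
  refine (imCLM.hasFDerivAt.comp_hasDerivAt s h).congr_deriv ?_
  simp [sub_eq_add_neg]

theorem im_derivMulConj_neg_of_im_pos (hu : Differentiable ℂ u)
    (hV : ∀ w, deriv (deriv u) w = V w * u w) (hu0 : u ≠ 0) {x y : ℝ}
    (hlim : Tendsto (fun t : ℝ => derivMulConj u (t + y * I)) atTop (𝓝 0))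
    (hVim : ∀ t, x ≤ t → 0 < (V (t + y * I)).im) : (derivMulConj u (x + y * I)).im < 0 := by
  obtain ⟨t, ht, hut⟩ := exists_ne_zero_on_horizontal_segment hu hu0 y (lt_add_one x)
  exact neg_of_hasDerivAt_nonneg_of_tendsto_atTop
    (f := fun t => (derivMulConj u (t + y * I)).im) (hasDerivAt_im_derivMulConj_horizontal hu hV y)
    (fun s hs => mul_nonneg (hVim s hs).le (normSq_nonneg _))
    ((continuous_im.tendsto 0).comp hlim)
    ⟨t, ht.1, (mul_pos (hVim t ht.1.le) (normSq_pos.2 hut)).ne'⟩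

theorem im_derivMulConj_neg_of_im_nonpos (hu : Differentiable ℂ u)
    (hV : ∀ w, deriv (deriv u) w = V w * u w) (hu0 : u ≠ 0) {x y T : ℝ}
    (hlim : Tendsto (fun t : ℝ => derivMulConj u (t + y * I)) atBot (𝓝 0))
    (hVim : ∀ t ≤ x, (V (t + y * I)).im ≤ 0) (hVneg : ∀ t ≤ T, (V (t + y * I)).im < 0) :
    (derivMulConj u (x + y * I)).im < 0 := by
  obtain ⟨t, ht, hut⟩ := exists_ne_zero_on_horizontal_segment hu hu0 y (sub_one_lt (min x T))
  exact neg_of_hasDerivAt_nonpos_of_tendsto_atBot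
    (f := fun t => (derivMulConj u (t + y * I)).im) (hasDerivAt_im_derivMulConj_horizontal hu hV y)
    (fun s hs => mul_nonpos_of_nonpos_of_nonneg (hVim s hs) (normSq_nonneg _))
    ((continuous_im.tendsto 0).comp hlim)
    ⟨t, ht.2.trans_le (min_le_left x T),
      (mul_neg_of_neg_of_pos (hVneg t (ht.2.le.trans (min_le_right x T)))
        (normSq_pos.2 hut)).ne⟩

theorem im_derivMulConj_le_of_re_nonpos (hu : Differentiable ℂ u)
    (hV : ∀ w, deriv (deriv u) w = V w * u w) {x y : ℝ} (hy : 0 ≤ y)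
    (hVre : ∀ s ∈ Icc 0 y, (V (x + s * I)).re ≤ 0) :
    (derivMulConj u (x + y * I)).im ≤ (derivMulConj u x).im := by
  have hanti := antitoneOn_of_hasDerivWithinAt_nonpos (convex_Icc 0 y)
    (fun s _ => (hasDerivAt_im_derivMulConj_vertical hu hV x s).continuousAt.continuousWithinAt)
    (fun s _ => (hasDerivAt_im_derivMulConj_vertical hu hV x s).hasDerivWithinAt)
    (fun s hs => sub_nonpos.2 <| (mul_nonpos_of_nonpos_of_nonneg
      (hVre s (interior_subset hs)) (normSq_nonneg _)).trans (normSq_nonneg _))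
  simpa using hanti (left_mem_Icc.2 hy) (right_mem_Icc.2 hy) hy

theorem eq_zero_of_re_pos (hu : Differentiable ℂ u)
    (hV : ∀ w, deriv (deriv u) w = V w * u w) {y : ℝ}
    (hlim : Tendsto (fun t : ℝ => derivMulConj u (t + y * I)) (cocompact ℝ) (𝓝 0))
    (hVre : ∀ t : ℝ, 0 < (V (t + y * I)).re) : u = 0 := by
  have hre : Tendsto (fun t : ℝ => (derivMulConj u (t + y * I)).re) (cocompact ℝ) (𝓝 0) :=
    (continuous_re.tendsto 0).comp hlim
  have hzero := eq_zero_of_hasDerivAt_nonneg_of_tendsto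
    (hasDerivAt_re_derivMulConj_horizontal hu hV y)
    (fun t => add_nonneg (mul_nonneg (hVre t).le (normSq_nonneg _)) (normSq_nonneg _))
    (hre.mono_left atBot_le_cocompact) (hre.mono_left atTop_le_cocompact)
  by_contra hne
  obtain ⟨t, -, ht⟩ := exists_ne_zero_on_horizontal_segment hu hne y zero_lt_one
  have h : (V (t + y * I)).re * normSq (u (t + y * I)) + normSq (deriv u (t + y * I)) = 0 :=
    congrFun hzero t
  linarith [mul_pos (hVre t) (normSq_pos.2 ht), normSq_nonneg (deriv u (t + y * I))]

end Potential

theorem im_I_mul_cube_sub (lam : ℂ) (t y : ℝ) :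
    (I * (t + y * I) ^ 3 - lam).im = t ^ 3 - 3 * t * y ^ 2 - lam.im := by
  simp only [sub_im, mul_im, mul_re, pow_succ, pow_zero, one_mul, add_re, add_im, ofReal_re,
    ofReal_im, I_re, I_im]
  ring

theorem re_I_mul_cube_sub (lam : ℂ) (x s : ℝ) :
    (I * (x + s * I) ^ 3 - lam).re = s ^ 3 - 3 * s * x ^ 2 - lam.re := by
  simp only [sub_re, mul_im, mul_re, pow_succ, pow_zero, one_mul, add_re, add_im, ofReal_re,
    ofReal_im, I_re, I_im]
  ring

section Cubic

variable {β c x y t : ℝ}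

theorem cubic_le_cubic (hx : 0 ≤ x) (hyx : y ^ 2 ≤ x ^ 2) (hxt : x ≤ t) :
    x ^ 3 - 3 * x * y ^ 2 ≤ t ^ 3 - 3 * t * y ^ 2 := by
  have h : 3 * y ^ 2 ≤ t ^ 2 + t * x + x ^ 2 := by nlinarith
  nlinarith [mul_nonneg (sub_nonneg.2 hxt) (sub_nonneg.2 h)]

theorem cubic_le_two_mul_abs_cube (hx : x ≤ 2 * |y|) : x ^ 3 - 3 * x * y ^ 2 ≤ 2 * |y| ^ 3 := by
  rw [← sq_abs y]
  nlinarith [mul_nonpos_of_nonneg_of_nonpos (sq_nonneg (x + |y|)) (sub_nonpos.2 hx)]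

theorem cubic_neg_of_le_neg_two_abs (hβ : 0 < β) (ht : t ≤ -2 * |y|) :
    t ^ 3 - 3 * t * y ^ 2 - β < 0 := by
  have ht0 : t ≤ 0 := ht.trans (by linarith [abs_nonneg y])
  have h : 0 ≤ t ^ 2 - 3 * y ^ 2 := by nlinarith [sq_abs y, abs_nonneg y]
  nlinarith [mul_nonpos_of_nonpos_of_nonneg ht0 h]

theorem cubic_pos_of_le (hβ : 0 ≤ β) (hx : 0 < x) (hQ : 0 < x ^ 3 - 3 * x * y ^ 2 - β)
    (ht : x ≤ t) : 0 < t ^ 3 - 3 * t * y ^ 2 - β := by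
  have hyx : y ^ 2 ≤ x ^ 2 := by nlinarith [sq_nonneg y]
  linarith [cubic_le_cubic hx.le hyx ht]

/-- The local maximum of `t ↦ t ^ 3 - 3 * t * y ^ 2 - β` is `2 * |y| ^ 3 - β`, attained at
`t = -|y|`; this is where the constant `c = (β / 2) ^ (1 / 3)` comes from. -/
theorem cubic_nonpos_of_abs_le (hc : 2 * c ^ 3 = β) (hy : |y| ≤ c) (hx : x ≤ 2 * |y|) :
    x ^ 3 - 3 * x * y ^ 2 - β ≤ 0 := by
  linarith [cubic_le_two_mul_abs_cube hx, pow_le_pow_left₀ (abs_nonneg y) hy 3]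

theorem cubic_nonpos_of_le_of_abs_le (hc : 2 * c ^ 3 = β) (hy : |y| ≤ c)
    (hQ : x ^ 3 - 3 * x * y ^ 2 - β ≤ 0) (ht : t ≤ x) : t ^ 3 - 3 * t * y ^ 2 - β ≤ 0 := by
  rcases le_or_gt t (2 * |y|) with hty | hty
  · exact cubic_nonpos_of_abs_le hc hy hty
  · have hyt : y ^ 2 ≤ t ^ 2 := by nlinarith [sq_abs y, abs_nonneg y]
    linarith [cubic_le_cubic (by linarith [abs_nonneg y]) hyt ht]

theorem cubic_nonpos_of_le_of_le_neg (hc : 2 * c ^ 3 = β) (hc0 : 0 ≤ c) (hx : x ≤ -c)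
    (hQ : x ^ 3 - 3 * x * y ^ 2 - β < 0) (ht : t ≤ x) : t ^ 3 - 3 * t * y ^ 2 - β ≤ 0 := by
  rcases le_or_gt (y ^ 2) (x ^ 2) with hyx | hxy
  · have := cubic_le_cubic (by linarith) (by nlinarith) (neg_le_neg ht)
    nlinarith
  · nlinarith [mul_le_mul_of_nonneg_left hxy.le (show 0 ≤ -x by linarith),
      pow_le_pow_left₀ hc0 (show c ≤ -x by linarith) 3]

theorem cubic_nonpos_of_mem_Icc (hβ : 0 ≤ β) (hQ : x ^ 3 - 3 * x * y ^ 2 - β ≤ 0)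
    (ht : t ∈ Icc 0 x) : t ^ 3 - 3 * t * y ^ 2 - β ≤ 0 := by
  rcases le_or_gt (y ^ 2) (t ^ 2) with hyt | hty
  · linarith [cubic_le_cubic ht.1 hyt ht.2]
  · nlinarith [mul_nonneg ht.1 (sub_nonneg.2 hty.le)]

end Cubic

/-- The decay of an eigenfunction is only used through the vanishing of `u' ū` at both ends of
every horizontal line. -/
structure IsCubicEigenfunction (lam : ℂ) (u : ℂ → ℂ) : Prop where
  differentiable : Differentiable ℂ u
  ne_zero : u ≠ 0
  deriv_deriv : ∀ w, deriv (deriv u) w = (I * w ^ 3 - lam) * u w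
  tendsto_horizontal :
    ∀ y : ℝ, Tendsto (fun t : ℝ => derivMulConj u (t + y * I)) (cocompact ℝ) (𝓝 0)

namespace IsCubicEigenfunction

variable {lam : ℂ} {u : ℂ → ℂ}

theorem im_neg_of_cubic_pos (hu : IsCubicEigenfunction lam u) (hβ : 0 < lam.im) {x y : ℝ}
    (hx : 0 < x) (hQ : 0 < x ^ 3 - 3 * x * y ^ 2 - lam.im) :
    (derivMulConj u (x + y * I)).im < 0 :=
  im_derivMulConj_neg_of_im_pos hu.differentiable hu.deriv_deriv hu.ne_zero
    ((hu.tendsto_horizontal y).mono_left atTop_le_cocompact) fun t ht => by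
      rw [im_I_mul_cube_sub]; exact cubic_pos_of_le hβ.le hx hQ ht

theorem im_neg_of_cubic_nonpos (hu : IsCubicEigenfunction lam u) (hβ : 0 < lam.im) {x y : ℝ}
    (hQ : ∀ t ≤ x, t ^ 3 - 3 * t * y ^ 2 - lam.im ≤ 0) :
    (derivMulConj u (x + y * I)).im < 0 :=
  im_derivMulConj_neg_of_im_nonpos (T := -2 * |y|) hu.differentiable hu.deriv_deriv hu.ne_zero
    ((hu.tendsto_horizontal y).mono_left atBot_le_cocompact)
    (fun t ht => by rw [im_I_mul_cube_sub]; exact hQ t ht)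
    (fun t ht => by rw [im_I_mul_cube_sub]; exact cubic_neg_of_le_neg_two_abs hβ ht)

theorem im_neg_of_abs_le (hu : IsCubicEigenfunction lam u) (hβ : 0 < lam.im) {c : ℝ}
    (hc : 2 * c ^ 3 = lam.im) (x : ℝ) {y : ℝ} (hy : |y| ≤ c) :
    (derivMulConj u (x + y * I)).im < 0 := by
  rcases le_or_gt (x ^ 3 - 3 * x * y ^ 2 - lam.im) 0 with hQ | hQ
  · exact hu.im_neg_of_cubic_nonpos hβ fun t ht => cubic_nonpos_of_le_of_abs_le hc hy hQ ht
  · have hx : 0 < x := by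
      by_contra! hx
      exact hQ.not_ge (cubic_nonpos_of_abs_le hc hy (hx.trans (by positivity)))
    exact hu.im_neg_of_cubic_pos hβ hx hQ

theorem re_nonneg (hu : IsCubicEigenfunction lam u) : 0 ≤ lam.re := by
  by_contra! hα
  exact hu.ne_zero <| eq_zero_of_re_pos hu.differentiable hu.deriv_deriv
    (hu.tendsto_horizontal 0) fun t => by rw [re_I_mul_cube_sub]; linarith

end IsCubicEigenfunction

/-- Let `u` be an eigenfunction of the cubic PT-symmetric oscillator
`-u'' - (iz)³u = lam·u` with eigenvalue `lam = α + iβ`, and assume `β = Im lam > 0`.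
Then `Im(u'(z)·conj(u(z))) < 0` for every `z` in
`B₁ ∪ {z ∈ B₄ : Re z ≤ -(β/2)^{1/3}} ∪ {z ∉ A₁ : Im z ≥ -(β/2)^{1/3}}`, where
`A₁ = {z : Re(iz³-lam) > 0, Im z > 0}`, `B₁ = {z : Im(iz³-lam) > 0, Re z > 0}` and
`B₄ = {z : Im(iz³-lam) < 0}`. -/
theorem im_wronskian_neg_region
    (lam : ℂ) (u : ℂ → ℂ)
    (hbeta : 0 < lam.im)
    (hu_entire : Differentiable ℂ u)
    (hu_ne : u ≠ 0)
    (hode : ∀ w : ℂ, iteratedDeriv 2 u w = (Complex.I * w ^ 3 - lam) * u w)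
    (hdecay : ∀ M : ℝ, 0 < M → ∃ C₁ > (0 : ℝ), ∃ C₂ > (0 : ℝ), ∀ x y : ℝ, |y| ≤ M →
      ‖u (x + y * Complex.I)‖ + ‖deriv u (x + y * Complex.I)‖
        ≤ C₁ * Real.exp (-(|x| ^ C₂))) :
    ∀ z : ℂ,
      (z ∈ {w : ℂ | 0 < (Complex.I * w ^ 3 - lam).im ∧ 0 < w.re} ∪
        {w : ℂ | ((Complex.I * w ^ 3 - lam).im < 0) ∧
          w.re ≤ -((lam.im / 2) ^ ((1 : ℝ) / 3))} ∪
        {w : ℂ | w ∉ {v : ℂ | 0 < (Complex.I * v ^ 3 - lam).re ∧ 0 < v.im} ∧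
          -((lam.im / 2) ^ ((1 : ℝ) / 3)) ≤ w.im}) →
      (deriv u z * conj (u z)).im < 0 := by
  have hu : IsCubicEigenfunction lam u :=
    ⟨hu_entire, hu_ne, fun w => by simpa [iteratedDeriv_succ, iteratedDeriv_one] using hode w,
      tendsto_derivMulConj_horizontal hdecay⟩
  set c := (lam.im / 2) ^ ((1 : ℝ) / 3) with hc_def
  have hc0 : 0 < c := by positivity
  have hc : 2 * c ^ 3 = lam.im := by
    rw [hc_def, ← rpow_natCast, ← rpow_mul (by positivity)]; norm_num; ring
  intro z hz
  obtain ⟨x, y, rfl⟩ : ∃ x y : ℝ, z = x + y * I := ⟨z.re, z.im, (re_add_im z).symm⟩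
  simp only [mem_union, mem_ofPred_eq, im_I_mul_cube_sub, re_I_mul_cube_sub, add_re, add_im,
    mul_re, mul_im, ofReal_re, ofReal_im, I_re, I_im, mul_zero, mul_one, sub_self, add_zero,
    zero_add] at hz
  change (derivMulConj u (x + y * I)).im < 0
  rcases hz with (⟨hQ, hx⟩ | ⟨hQ, hx⟩) | ⟨hA, hy⟩
  · exact hu.im_neg_of_cubic_pos hbeta hx hQ
  · exact hu.im_neg_of_cubic_nonpos hbeta fun t => cubic_nonpos_of_le_of_le_neg hc hc0.le hx hQ
  rcases le_or_gt y c with hyc | hyc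
  · exact hu.im_neg_of_abs_le hbeta hc x (abs_le.2 ⟨hy, hyc⟩)
  have hy0 : 0 < y := hc0.trans hyc
  have hR : y ^ 3 - 3 * y * x ^ 2 - lam.re ≤ 0 := not_lt.1 fun h => hA ⟨h, hy0⟩
  calc (derivMulConj u (x + y * I)).im
      ≤ (derivMulConj u x).im :=
        im_derivMulConj_le_of_re_nonpos hu.differentiable hu.deriv_deriv hy0.le fun s hs => by
          rw [re_I_mul_cube_sub]; exact cubic_nonpos_of_mem_Icc hu.re_nonneg hR hs
    _ < 0 := by simpa using hu.im_neg_of_abs_le hbeta hc x (y := 0) (by simpa using hc0.le)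
end

section
/- Assume β = Im λ > 0, and let ω₄ be a root of the equation iz³ = λ with Re ω₄ > 0 and Im ω₄ < 0 (the root in the fourth quadrant). Then Re(u'(z)·conj(u(z))) < 0 for every z in the set A₃ ∪ D₃ ∪ {z ∈ B₁ : Re z ≥ Re ω₄}, where D₃ := {x+iy ∈ ℂ : x+iy ∉ A₃ and there exists t > y with x+it ∈ A₃} (the region below A₃). -/
/-!
For `W = u' ū` and `V(z) = iz³ - λ`, the equation `u'' = V u` gives `∂ₓ Re W = Re V |u|² + |u'|²`
and `∂_y Re W = -Im V |u|²`. In the fourth quadrant `Re V` increases along horizontal rays to the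
right, so from a point where `Re V ≥ 0` the function `Re W` increases strictly (`u` and `u'` never
vanish together) to its limit `0` at `+∞`, and is therefore negative there. A point below `A₃` is
joined upwards to such a point by a vertical segment on which `Im V < 0`, so `Re W` only grows on
the way. A point of `B₁` with `Re z ≥ Re ω₄` is joined downwards, through `Im V ≥ 0`, to the curve
`Im V = 0`, whose lower branch lies in `{Re V ≥ 0}` to the right of `ω₄`.
-/

open Complex Real ComplexConjugate Filter Set Topology

theorem StrictMonoOn.lt_of_tendsto_atTop {α β : Type*} [LinearOrder α] [NoMaxOrder α]
    [TopologicalSpace β] [Preorder β] [OrderClosedTopology β] {f : α → β} {x : α} {a : β}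
    (hf : StrictMonoOn f (Ici x)) (hlim : Tendsto f atTop (𝓝 a)) : f x < a := by
  obtain ⟨x', hxx'⟩ := exists_gt x
  have : Nonempty α := ⟨x⟩
  calc f x < f x' := hf self_mem_Ici hxx'.le hxx'
    _ ≤ a := ge_of_tendsto hlim <| (eventually_ge_atTop x').mono fun s hs =>
      hf.monotoneOn hxx'.le (hxx'.le.trans hs) hs

namespace PTCubic

section SecondOrder

variable {V u : ℂ → ℂ}

theorem exists_iteratedDeriv_eq_mul_add_mul (hV : Differentiable ℂ V) (hu : Differentiable ℂ u)
    (hode : ∀ w, deriv (deriv u) w = V w * u w) (n : ℕ) :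
    ∃ a b : ℂ → ℂ, Differentiable ℂ a ∧ Differentiable ℂ b ∧
      iteratedDeriv n u = fun w => a w * u w + b w * deriv u w := by
  induction n with
  | zero => exact ⟨1, 0, differentiable_const _, differentiable_const _, by ext; simp⟩
  | succ n ih =>
    obtain ⟨a, b, ha, hb, hab⟩ := ih
    refine ⟨deriv a + b * V, a + deriv b, ha.deriv.add (hb.mul hV), ha.add hb.deriv, ?_⟩
    ext w
    rw [iteratedDeriv_succ, hab]
    refine (((ha w).hasDerivAt.mul (hu w).hasDerivAt).add
      ((hb w).hasDerivAt.mul (hu.deriv w).hasDerivAt)).deriv.trans ?_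
    simp only [hode, Pi.add_apply, Pi.mul_apply]
    ring

theorem eq_zero_of_eq_zero_of_deriv_eq_zero (hV : Differentiable ℂ V) (hu : Differentiable ℂ u)
    (hode : ∀ w, deriv (deriv u) w = V w * u w) {z₀ : ℂ} (h₀ : u z₀ = 0)
    (h₁ : deriv u z₀ = 0) : u = 0 := by
  have hcoeff (n : ℕ) : iteratedDeriv n u z₀ = 0 := by
    obtain ⟨a, b, -, -, hab⟩ := exists_iteratedDeriv_eq_mul_add_mul hV hu hode n
    simp [hab, h₀, h₁]
  funext z
  simpa [hcoeff] using (taylorSeries_eq_of_entire' (c := z₀) (z := z) hu).symm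

noncomputable def reWronskian (u : ℂ → ℂ) (z : ℂ) : ℝ := (deriv u z * conj (u z)).re

theorem hasDerivAt_reWronskian_line (hu : Differentiable ℂ u)
    (hode : ∀ w, deriv (deriv u) w = V w * u w) (z d : ℂ) (t : ℝ) :
    HasDerivAt (fun s : ℝ => reWronskian u (z + s * d))
      ((V (z + t * d) * d).re * normSq (u (z + t * d))
        + d.re * normSq (deriv u (z + t * d))) t := by
  set w := z + t * d
  have hline : HasDerivAt (fun c : ℂ => z + c * d) d t := by
    simpa using ((hasDerivAt_id (t : ℂ)).mul_const d).const_add z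
  have hu₀ : HasDerivAt (fun s : ℝ => u (z + s * d)) (deriv u w * d) t :=
    ((hu w).hasDerivAt.comp (t : ℂ) hline).comp_ofReal
  have hu₁ : HasDerivAt (fun s : ℝ => deriv u (z + s * d)) (V w * u w * d) t := by
    rw [← hode]
    exact ((hu.deriv w).hasDerivAt.comp (t : ℂ) hline).comp_ofReal
  have hW : HasDerivAt (fun s : ℝ => reWronskian u (z + s * d))
      (V w * u w * d * conj (u w) + deriv u w * conj (deriv u w * d)).re t :=
    reCLM.hasFDerivAt.comp_hasDerivAt t (hu₁.mul hu₀.star)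
  convert hW using 1
  simp only [add_re, mul_re, mul_im, conj_re, conj_im, normSq_apply]
  ring

theorem hasDerivAt_reWronskian_horizontal (hu : Differentiable ℂ u)
    (hode : ∀ w, deriv (deriv u) w = V w * u w) (x y : ℝ) :
    HasDerivAt (fun s : ℝ => reWronskian u (s + y * I))
      ((V (x + y * I)).re * normSq (u (x + y * I)) + normSq (deriv u (x + y * I))) x := by
  simpa only [mul_one, one_re, one_mul, add_comm (y * I : ℂ)] using
    hasDerivAt_reWronskian_line hu hode (y * I) 1 x

theorem hasDerivAt_reWronskian_vertical (hu : Differentiable ℂ u)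
    (hode : ∀ w, deriv (deriv u) w = V w * u w) (x y : ℝ) :
    HasDerivAt (fun t : ℝ => reWronskian u (x + t * I))
      (-(V (x + y * I)).im * normSq (u (x + y * I))) y := by
  simpa only [mul_I_re, I_re, zero_mul, add_zero] using
    hasDerivAt_reWronskian_line hu hode x I y

theorem reWronskian_le_of_im_nonpos (hu : Differentiable ℂ u)
    (hode : ∀ w, deriv (deriv u) w = V w * u w) {x y s : ℝ} (hys : y ≤ s)
    (him : ∀ r ∈ Icc y s, (V (x + r * I)).im ≤ 0) :
    reWronskian u (x + y * I) ≤ reWronskian u (x + s * I) := by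
  have hderiv := hasDerivAt_reWronskian_vertical hu hode x
  refine monotoneOn_of_deriv_nonneg (convex_Icc y s)
    (fun t _ => (hderiv t).continuousAt.continuousWithinAt)
    (fun t _ => (hderiv t).differentiableAt.differentiableWithinAt) (fun r hr => ?_)
    (left_mem_Icc.2 hys) (right_mem_Icc.2 hys) hys
  rw [interior_Icc] at hr
  rw [(hderiv r).deriv]
  exact mul_nonneg (neg_nonneg.2 (him r (Ioo_subset_Icc_self hr))) (normSq_nonneg _)

theorem reWronskian_le_of_im_nonneg (hu : Differentiable ℂ u)
    (hode : ∀ w, deriv (deriv u) w = V w * u w) {x y s : ℝ} (hys : y ≤ s)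
    (him : ∀ r ∈ Icc y s, 0 ≤ (V (x + r * I)).im) :
    reWronskian u (x + s * I) ≤ reWronskian u (x + y * I) := by
  have hderiv := hasDerivAt_reWronskian_vertical hu hode x
  refine antitoneOn_of_deriv_nonpos (convex_Icc y s)
    (fun t _ => (hderiv t).continuousAt.continuousWithinAt)
    (fun t _ => (hderiv t).differentiableAt.differentiableWithinAt) (fun r hr => ?_)
    (left_mem_Icc.2 hys) (right_mem_Icc.2 hys) hys
  rw [interior_Icc] at hr
  rw [(hderiv r).deriv]
  exact mul_nonpos_of_nonpos_of_nonneg (neg_nonpos.2 (him r (Ioo_subset_Icc_self hr)))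
    (normSq_nonneg _)

theorem reWronskian_neg_of_re_pos_right (hu : Differentiable ℂ u)
    (hode : ∀ w, deriv (deriv u) w = V w * u w) (hnv : ∀ w, u w = 0 → deriv u w ≠ 0)
    {x y : ℝ} (hlim : Tendsto (fun s : ℝ => reWronskian u (s + y * I)) atTop (𝓝 0))
    (hre : ∀ s, x < s → 0 < (V (s + y * I)).re) : reWronskian u (x + y * I) < 0 := by
  have hderiv := hasDerivAt_reWronskian_horizontal hu hode (y := y)
  refine (strictMonoOn_of_deriv_pos (convex_Ici x)
    (fun s _ => (hderiv s).continuousAt.continuousWithinAt) fun s hs => ?_).lt_of_tendsto_atTop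
    hlim
  rw [interior_Ici] at hs
  rw [(hderiv s).deriv]
  rcases eq_or_ne (u (s + y * I)) 0 with h | h
  · rw [h, map_zero, mul_zero, zero_add]
    exact normSq_pos.2 (hnv _ h)
  · exact add_pos_of_pos_of_nonneg (mul_pos (hre s hs) (normSq_pos.2 h)) (normSq_nonneg _)

end SecondOrder

theorem abs_reWronskian_le (u : ℂ → ℂ) (z : ℂ) :
    |reWronskian u z| ≤ (‖u z‖ + ‖deriv u z‖) ^ 2 :=
  calc |reWronskian u z| ≤ ‖deriv u z * conj (u z)‖ := abs_re_le_norm _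
    _ = ‖deriv u z‖ * ‖u z‖ := by rw [norm_mul, norm_conj]
    _ ≤ (‖u z‖ + ‖deriv u z‖) ^ 2 := by nlinarith [norm_nonneg (u z), norm_nonneg (deriv u z)]

theorem tendsto_reWronskian_of_decay {u : ℂ → ℂ}
    (hdecay : ∀ M : ℝ, 0 < M → ∃ C₁ > (0 : ℝ), ∃ C₂ > (0 : ℝ), ∀ x y : ℝ, |y| ≤ M →
      ‖u (x + y * I)‖ + ‖deriv u (x + y * I)‖ ≤ C₁ * Real.exp (-(|x| ^ C₂)))
    (y : ℝ) : Tendsto (fun s : ℝ => reWronskian u (s + y * I)) atTop (𝓝 0) := by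
  obtain ⟨C₁, hC₁, C₂, hC₂, hbound⟩ := hdecay (|y| + 1) (by positivity)
  have hexp : Tendsto (fun s : ℝ => (C₁ * Real.exp (-(|s| ^ C₂))) ^ 2) atTop (𝓝 0) := by
    have h := Real.tendsto_exp_atBot.comp <| tendsto_neg_atTop_atBot.comp <|
      (tendsto_rpow_atTop hC₂).comp tendsto_abs_atTop_atTop
    simpa using (tendsto_const_nhds.mul h).pow 2
  refine squeeze_zero_norm (fun s => ?_) hexp
  rw [Real.norm_eq_abs]
  exact (abs_reWronskian_le u _).trans (pow_le_pow_left₀ (by positivity)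
    (hbound s y (by linarith [abs_nonneg y])) 2)

theorem re_I_mul_cube_sub (lam : ℂ) (x y : ℝ) :
    (I * (x + y * I) ^ 3 - lam).re = y ^ 3 - 3 * x ^ 2 * y - lam.re := by
  simp [mul_re, mul_im, pow_succ]
  ring

theorem im_I_mul_cube_sub (lam : ℂ) (x y : ℝ) :
    (I * (x + y * I) ^ 3 - lam).im = x ^ 3 - 3 * x * y ^ 2 - lam.im := by
  simp [mul_re, mul_im, pow_succ]
  ring

theorem strictAntiOn_cube_sub (x : ℝ) :
    StrictAntiOn (fun r : ℝ => r ^ 3 - 3 * x ^ 2 * r) (Icc (-x) x) := by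
  refine strictAntiOn_of_deriv_neg (convex_Icc _ _) (by fun_prop) fun r hr => ?_
  rw [interior_Icc] at hr
  have hd : HasDerivAt (fun r : ℝ => r ^ 3 - 3 * x ^ 2 * r) (3 * r ^ 2 - 3 * x ^ 2) r := by
    simpa using (hasDerivAt_pow 3 r).fun_sub ((hasDerivAt_id r).const_mul (3 * x ^ 2))
  rw [hd.deriv]
  nlinarith [mul_pos (sub_pos.2 hr.2) (neg_lt_iff_pos_add.1 hr.1)]

theorem exists_neg_root_le {a b y : ℝ} (ha : 0 < a) (h : a * y ^ 2 < b) :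
    ∃ r₀ ≤ y, r₀ < 0 ∧ a * r₀ ^ 2 = b ∧ ∀ r ∈ Icc r₀ y, a * r ^ 2 ≤ b := by
  have hq : y ^ 2 < b / a := by rwa [lt_div_iff₀ ha, mul_comm]
  have hy : |y| < √(b / a) := by
    rw [← sqrt_sq_eq_abs]
    exact sqrt_lt_sqrt (sq_nonneg y) hq
  refine ⟨-√(b / a), by linarith [neg_abs_le y], by linarith [abs_nonneg y], ?_, fun r hr => ?_⟩
  · rw [neg_sq, sq_sqrt (by linarith [sq_nonneg y]), mul_div_cancel₀ _ ha.ne']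
  · have : r ^ 2 ≤ b / a := by
      simpa [sq_sqrt (by linarith [sq_nonneg y] : 0 ≤ b / a)] using
        sq_le_sq' hr.1 (hr.2.trans ((le_abs_self y).trans hy.le))
    rwa [le_div_iff₀ ha, mul_comm] at this

theorem neg_im_cube_le_of_re_cube_eq {a b x y : ℝ} (ha : 0 < a) (hb : b < 0) (hax : a ≤ x)
    (hy : y < 0) (hpos : 0 < a ^ 3 - 3 * a * b ^ 2)
    (hlevel : x ^ 3 - 3 * x * y ^ 2 = a ^ 3 - 3 * a * b ^ 2) :
    b ^ 3 - 3 * a ^ 2 * b ≤ y ^ 3 - 3 * x ^ 2 * y := by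
  have hx : 0 < x := ha.trans_le hax
  have hxy : 3 * y ^ 2 < x ^ 2 := by nlinarith
  have hab : 3 * b ^ 2 < a ^ 2 := by nlinarith
  have key : 0 ≤ (x - a) * (x ^ 2 + a * x + a ^ 2 - 3 * b ^ 2) :=
    mul_nonneg (by linarith) (by nlinarith)
  have hby : b ^ 2 ≤ y ^ 2 := by nlinarith [mul_pos hx hx]
  have hax2 : a ^ 2 ≤ x ^ 2 := by nlinarith
  -- both sides are positive and, the real parts of the cubes being equal, their squares differ
  -- by `|x + iy|⁶ - |a + ib|⁶`
  have hsq : (y ^ 3 - 3 * x ^ 2 * y) ^ 2 - (b ^ 3 - 3 * a ^ 2 * b) ^ 2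
      = (x ^ 2 + y ^ 2) ^ 3 - (a ^ 2 + b ^ 2) ^ 3 := by
    linear_combination (-(x ^ 3 - 3 * x * y ^ 2 + a ^ 3 - 3 * a * b ^ 2)) * hlevel
  have hmod : (a ^ 2 + b ^ 2) ^ 3 ≤ (x ^ 2 + y ^ 2) ^ 3 :=
    pow_le_pow_left₀ (by positivity) (by linarith) 3
  have hb3 : 0 < b ^ 3 - 3 * a ^ 2 * b := by nlinarith
  have hy3 : 0 ≤ y ^ 3 - 3 * x ^ 2 * y := by nlinarith
  nlinarith

section Cubic

variable {lam : ℂ} {u : ℂ → ℂ}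

theorem reWronskian_neg_of_re_nonneg (hu : Differentiable ℂ u)
    (hode : ∀ w, deriv (deriv u) w = (I * w ^ 3 - lam) * u w)
    (hnv : ∀ w, u w = 0 → deriv u w ≠ 0)
    (hlim : ∀ y : ℝ, Tendsto (fun s : ℝ => reWronskian u (s + y * I)) atTop (𝓝 0))
    {x y : ℝ} (hx : 0 < x) (hy : y < 0) (hre : 0 ≤ (I * (x + y * I) ^ 3 - lam).re) :
    reWronskian u (x + y * I) < 0 := by
  refine reWronskian_neg_of_re_pos_right (V := fun w => I * w ^ 3 - lam) hu hode hnv (hlim y)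
    fun s hs => ?_
  rw [re_I_mul_cube_sub] at hre ⊢
  nlinarith [mul_pos (mul_pos (sub_pos.2 hs) (by linarith : (0 : ℝ) < s + x)) (neg_pos.2 hy)]

theorem reWronskian_neg_of_le_of_re_pos (hu : Differentiable ℂ u)
    (hode : ∀ w, deriv (deriv u) w = (I * w ^ 3 - lam) * u w)
    (hnv : ∀ w, u w = 0 → deriv u w ≠ 0)
    (hlim : ∀ y : ℝ, Tendsto (fun s : ℝ => reWronskian u (s + y * I)) atTop (𝓝 0))
    (hbeta : 0 ≤ lam.im) {x y t : ℝ} (hx : 0 < x) (hyt : y ≤ t) (ht : t < 0)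
    (hre : 0 < (I * (x + t * I) ^ 3 - lam).re) : reWronskian u (x + y * I) < 0 := by
  by_cases hy : 0 ≤ (I * (x + y * I) ^ 3 - lam).re
  · exact reWronskian_neg_of_re_nonneg hu hode hnv hlim hx (hyt.trans_lt ht) hy
  rw [re_I_mul_cube_sub, not_le] at hy
  rw [re_I_mul_cube_sub] at hre
  -- `r ↦ Re V(x + ir)` decreases on `[-x, x]`, and `Im V(x + ir) < 0` for `r ≤ -x`
  have hyx : y < -x := by
    by_contra! hxy
    have := strictAntiOn_cube_sub x ⟨hxy, by linarith⟩ ⟨by linarith, by linarith⟩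
      (lt_of_le_of_ne hyt (by rintro rfl; linarith))
    linarith
  set s := min t (-x) with hs
  have hts : t ^ 3 - 3 * x ^ 2 * t ≤ s ^ 3 - 3 * x ^ 2 * s := by
    rcases le_total t (-x) with h | h
    · rw [hs, min_eq_left h]
    · rw [hs, min_eq_right h]
      exact (strictAntiOn_cube_sub x).antitoneOn ⟨le_rfl, by linarith⟩ ⟨h, by linarith⟩ h
  have hsx : s ≤ -x := min_le_right _ _
  calc reWronskian u (x + y * I) ≤ reWronskian u (x + s * I) :=
        reWronskian_le_of_im_nonpos (V := fun w => I * w ^ 3 - lam) hu hode (le_min hyt hyx.le)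
          fun r hr => by
            have : x ^ 2 ≤ r ^ 2 := by nlinarith [hr.2]
            rw [im_I_mul_cube_sub]
            nlinarith [mul_le_mul_of_nonneg_left this hx.le]
    _ < 0 := reWronskian_neg_of_re_nonneg hu hode hnv hlim hx (by linarith)
        (by rw [re_I_mul_cube_sub]; linarith)

theorem reWronskian_neg_of_im_pos (hu : Differentiable ℂ u)
    (hode : ∀ w, deriv (deriv u) w = (I * w ^ 3 - lam) * u w)
    (hnv : ∀ w, u w = 0 → deriv u w ≠ 0)
    (hlim : ∀ y : ℝ, Tendsto (fun s : ℝ => reWronskian u (s + y * I)) atTop (𝓝 0))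
    (hbeta : 0 < lam.im) {ω : ℂ} (hω : I * ω ^ 3 = lam) (hωre : 0 < ω.re) (hωim : ω.im < 0)
    {x y : ℝ} (hxω : ω.re ≤ x) (him : 0 < (I * (x + y * I) ^ 3 - lam).im) :
    reWronskian u (x + y * I) < 0 := by
  have hx : 0 < x := hωre.trans_le hxω
  have hroot : I * (ω.re + ω.im * I) ^ 3 - lam = 0 := by rw [re_add_im, hω, sub_self]
  have hα := congrArg re hroot
  have hβ := congrArg im hroot
  rw [re_I_mul_cube_sub, zero_re] at hα
  rw [im_I_mul_cube_sub, zero_im] at hβ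
  rw [im_I_mul_cube_sub] at him
  obtain ⟨r₀, hr₀y, hr₀, hr₀root, hr₀le⟩ :=
    exists_neg_root_le (a := 3 * x) (b := x ^ 3 - lam.im) (y := y) (by positivity) (by linarith)
  have hlevel := neg_im_cube_le_of_re_cube_eq hωre hωim hxω hr₀ (by linarith) (by linarith)
  calc reWronskian u (x + y * I) ≤ reWronskian u (x + r₀ * I) :=
        reWronskian_le_of_im_nonneg (V := fun w => I * w ^ 3 - lam) hu hode hr₀y
          fun r hr => by rw [im_I_mul_cube_sub]; linarith [hr₀le r hr]
    _ < 0 := reWronskian_neg_of_re_nonneg hu hode hnv hlim hx hr₀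
        (by rw [re_I_mul_cube_sub]; linarith)

end Cubic

end PTCubic

/-- Let `u` be an eigenfunction of the cubic PT-symmetric oscillator
`-u'' - (iz)³u = lam·u` with eigenvalue `lam = α + iβ`, assume `β = Im lam > 0`, and
let `ω₄` be the root of `iz³ = lam` in the fourth quadrant.  Then
`Re(u'(z)·conj(u(z))) < 0` for every `z ∈ A₃ ∪ D₃ ∪ {z ∈ B₁ : Re z ≥ Re ω₄}`, where
`A₃ = {z : Re(iz³-lam) > 0, Re z > 0, Im z < 0}`,
`D₃ = {x+iy ∉ A₃ : ∃ t > y, x+it ∈ A₃}` (the region below `A₃`), and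
`B₁ = {z : Im(iz³-lam) > 0, Re z > 0}`. -/
theorem re_wronskian_neg_region
    (lam : ℂ) (u : ℂ → ℂ)
    (hbeta : 0 < lam.im)
    (hu_entire : Differentiable ℂ u)
    (hu_ne : u ≠ 0)
    (hode : ∀ w : ℂ, iteratedDeriv 2 u w = (Complex.I * w ^ 3 - lam) * u w)
    (hdecay : ∀ M : ℝ, 0 < M → ∃ C₁ > (0 : ℝ), ∃ C₂ > (0 : ℝ), ∀ x y : ℝ, |y| ≤ M →
      ‖u (x + y * Complex.I)‖ + ‖deriv u (x + y * Complex.I)‖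
        ≤ C₁ * Real.exp (-(|x| ^ C₂)))
    (ω₄ : ℂ) (hω₄ : Complex.I * ω₄ ^ 3 = lam) (hω₄re : 0 < ω₄.re) (hω₄im : ω₄.im < 0) :
    ∀ z : ℂ,
      (z ∈ {w : ℂ | 0 < (Complex.I * w ^ 3 - lam).re ∧ 0 < w.re ∧ w.im < 0} ∪
        {w : ℂ | w ∉ {v : ℂ | 0 < (Complex.I * v ^ 3 - lam).re ∧ 0 < v.re ∧ v.im < 0} ∧
          ∃ t : ℝ, w.im < t ∧
            (w.re + t * Complex.I) ∈
              {v : ℂ | 0 < (Complex.I * v ^ 3 - lam).re ∧ 0 < v.re ∧ v.im < 0}} ∪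
        {w : ℂ | (0 < (Complex.I * w ^ 3 - lam).im ∧ 0 < w.re) ∧ ω₄.re ≤ w.re}) →
      (deriv u z * conj (u z)).re < 0 := by
  intro z hz
  have hode' (w : ℂ) : deriv (deriv u) w = (I * w ^ 3 - lam) * u w := by
    rw [← hode, iteratedDeriv_succ, iteratedDeriv_one]
  have hnv (w : ℂ) (h₀ : u w = 0) (h₁ : deriv u w = 0) : False :=
    hu_ne (PTCubic.eq_zero_of_eq_zero_of_deriv_eq_zero (by fun_prop) hu_entire hode' h₀ h₁)
  have hlim := PTCubic.tendsto_reWronskian_of_decay hdecay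
  change PTCubic.reWronskian u z < 0
  rw [← re_add_im z]
  rcases hz with (⟨hre, hx, hy⟩ | ⟨-, t, hyt, hre, hx, ht⟩) | ⟨⟨him, -⟩, hxω⟩
  · rw [← re_add_im z] at hre
    exact PTCubic.reWronskian_neg_of_le_of_re_pos hu_entire hode' hnv hlim hbeta.le hx le_rfl hy hre
  · exact PTCubic.reWronskian_neg_of_le_of_re_pos hu_entire hode' hnv hlim hbeta.le
      (by simpa using hx) hyt.le (by simpa using ht) hre
  · rw [← re_add_im z] at him
    exact PTCubic.reWronskian_neg_of_im_pos hu_entire hode' hnv hlim hbeta hω₄ hω₄re hω₄im hxω him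
end

section
/- Suppose λ is real (β = 0) and that u is normalized so that u(z) = conj(u(−conj(z))) for all z ∈ ℂ (PT-symmetric normalization with respect to the imaginary axis). Then Re(u'(z)·conj(u(z))) < 0 for every z in closure(A₁) ∩ {z : Re z < 0}, and Re(u'(z)·conj(u(z))) > 0 for every z in closure(A₁) ∩ {z : Re z > 0}. -/
open Complex Real ComplexConjugate

open Set Filter Topology

/-!
Along a horizontal line `t ↦ t + iy`, put `W(t) = Re(u' ū)`. Then `2W` is the derivative of
`|u|²`, and the equation `u'' = V u` with `V z = iz³ - λ` gives `W' = |u'|² + Re V · |u|²`.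
The symmetry `u(z) = conj(u(-z̄))` makes `|u|²` even in `t`, so `W` is odd and vanishes on
the imaginary axis. For `z` in the closure of `A₁` with `Re z > 0`, `Re V(t + iy) = y³ - 3t²y - Re λ`
only grows as `t` decreases from `Re z` to `0`, so `W' ≥ 0` on that segment. It cannot vanish
identically there: `u'` would then vanish on a segment, hence everywhere, forcing `V u = u'' = 0`
and `u = 0`. Hence `W(z) > 0`, and the case `Re z < 0` follows from oddness.
-/

lemma re_I_mul_pow_three_sub (z w : ℂ) :
    (I * z ^ 3 - w).re = z.im ^ 3 - 3 * z.re ^ 2 * z.im - w.re := by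
  simp only [pow_succ, pow_zero, one_mul, sub_re, mul_re, I_re, mul_im, zero_mul, I_im, zero_sub]
  ring

lemma re_I_mul_pow_three_sub_le (lam : ℂ) {x y t : ℝ} (hy : 0 ≤ y) (ht : 0 ≤ t) (htx : t ≤ x) :
    (I * (x + y * I) ^ 3 - lam).re ≤ (I * (t + y * I) ^ 3 - lam).re := by
  simp only [re_I_mul_pow_three_sub, add_re, add_im, ofReal_re, ofReal_im, mul_re, mul_im,
    I_re, I_im]
  nlinarith [mul_nonneg (mul_nonneg (sub_nonneg.2 htx) (add_nonneg ht (ht.trans htx))) hy]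

lemma closure_setOf_re_pos_im_pos_subset {f : ℂ → ℂ} (hf : Continuous f) :
    closure {v | 0 < (f v).re ∧ 0 < v.im} ⊆ {v | 0 ≤ (f v).re ∧ 0 ≤ v.im} :=
  (closure_inter_subset_inter_closure _ _).trans <| inter_subset_inter
    (closure_lt_subset_le continuous_const (continuous_re.comp hf))
    (closure_lt_subset_le continuous_const continuous_im)

lemma lt_of_hasDerivAt_nonneg_of_exists_ne_zero {φ ψ : ℝ → ℝ} {a b : ℝ}
    (hφc : ContinuousOn φ (Icc a b)) (hφ : ∀ t ∈ Ioo a b, HasDerivAt φ (ψ t) t)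
    (hψ : ∀ t ∈ Ioo a b, 0 ≤ ψ t) (hne : ∃ t ∈ Ioo a b, ψ t ≠ 0) : φ a < φ b := by
  obtain ⟨t₀, ht₀, hψt₀⟩ := hne
  have hab : a ≤ b := (ht₀.1.trans ht₀.2).le
  have hmono : MonotoneOn φ (Icc a b) := by
    refine monotoneOn_of_hasDerivWithinAt_nonneg (f' := ψ) (convex_Icc a b) hφc ?_ ?_ <;>
      rw [interior_Icc]
    · exact fun t ht => (hφ t ht).hasDerivWithinAt
    · exact hψ
  refine (hmono (left_mem_Icc.2 hab) (right_mem_Icc.2 hab) hab).lt_of_ne fun hφab => hψt₀ ?_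
  have hconst : ∀ t ∈ Icc a b, φ t = φ a := fun t ht =>
    le_antisymm (hφab ▸ hmono ht (right_mem_Icc.2 hab) ht.2) (hmono (left_mem_Icc.2 hab) ht ht.1)
  have hev : φ =ᶠ[𝓝 t₀] fun _ => φ a := by
    filter_upwards [Icc_mem_nhds ht₀.1 ht₀.2] with t ht using hconst t ht
  exact (hev.hasDerivAt_iff.1 (hφ t₀ ht₀)).unique (hasDerivAt_const t₀ _)

lemma HasDerivAt.re_mul_conj {f g : ℝ → ℂ} {f' g' : ℂ} {t : ℝ} (hf : HasDerivAt f f' t)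
    (hg : HasDerivAt g g' t) :
    HasDerivAt (fun s => (f s * conj (g s)).re) ((f' * conj (g t) + f t * conj g').re) t :=
  reCLM.hasFDerivAt.comp_hasDerivAt t (hf.mul hg.star)

lemma HasDerivAt.comp_ofReal_add {f : ℂ → ℂ} {f' c : ℂ} {t : ℝ} (hf : HasDerivAt f f' (t + c)) :
    HasDerivAt (fun s : ℝ => f (s + c)) f' t :=
  (hf.comp_add_const (t : ℂ) c).comp_ofReal

lemma Differentiable.eq_zero_of_forall_mem_Ioo {f : ℂ → ℂ} (hf : Differentiable ℂ f) {a b : ℝ}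
    (hab : a < b) (c : ℂ) (h : ∀ t ∈ Ioo a b, f (t + c) = 0) : f = 0 := by
  set t₀ := (a + b) / 2
  have ht₀ : t₀ ∈ Ioo a b := ⟨by simp only [t₀]; linarith, by simp only [t₀]; linarith⟩
  have hline : Tendsto (fun t : ℝ => (t : ℂ) + c) (𝓝[≠] t₀) (𝓝[≠] (t₀ + c)) :=
    (continuous_ofReal.add continuous_const).continuousWithinAt.tendsto_nhdsWithin
      fun t ht => by simpa using ht
  have hfreq : ∃ᶠ z in 𝓝[≠] ((t₀ : ℂ) + c), f z = 0 :=
    hline.frequently (eventually_nhdsWithin_of_eventually_nhds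
      (eventually_of_mem (Ioo_mem_nhds ht₀.1 ht₀.2) h)).frequently
  funext z
  exact (analyticOnNhd_univ_iff_differentiable.2 hf).eqOn_zero_of_preconnected_of_frequently_eq_zero
    isPreconnected_univ (mem_univ _) hfreq (mem_univ z)

section SecondOrder

variable {u V : ℂ → ℂ}

lemma hasDerivAt_normSq_comp_ofReal_add (hu : Differentiable ℂ u) (c : ℂ) (t : ℝ) :
    HasDerivAt (fun s : ℝ => normSq (u (s + c))) (2 * (deriv u (t + c) * conj (u (t + c))).re) t := by
  have hu' : HasDerivAt (fun s : ℝ => u (s + c)) (deriv u (t + c)) t :=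
    (hu _).hasDerivAt.comp_ofReal_add
  convert hu'.re_mul_conj hu' using 1
  · funext s
    rw [mul_conj, ofReal_re]
  · rw [add_re, ← conj_re (u _ * _), map_mul, conj_conj, mul_comm (conj _)]
    ring

lemma hasDerivAt_re_deriv_mul_conj_comp_ofReal_add (hu : Differentiable ℂ u)
    (hode : ∀ w, deriv (deriv u) w = V w * u w) (c : ℂ) (t : ℝ) :
    HasDerivAt (fun s : ℝ => (deriv u (s + c) * conj (u (s + c))).re)
      (normSq (deriv u (t + c)) + (V (t + c)).re * normSq (u (t + c))) t := by
  have hu'' : HasDerivAt (fun s : ℝ => deriv u (s + c)) (V (t + c) * u (t + c)) t :=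
    hode (t + c) ▸ (hu.deriv _).hasDerivAt.comp_ofReal_add
  convert hu''.re_mul_conj (hu _).hasDerivAt.comp_ofReal_add using 1
  rw [mul_assoc, mul_conj, mul_conj, add_re, add_comm, ofReal_re, re_mul_ofReal]

lemma re_deriv_mul_conj_neg_conj (hu : Differentiable ℂ u)
    (hsym : ∀ z, u z = conj (u (-conj z))) (z : ℂ) :
    (deriv u (-conj z) * conj (u (-conj z))).re = -(deriv u z * conj (u z)).re := by
  set F := fun s : ℝ => normSq (u (s + z.im * I))
  have hF := hasDerivAt_normSq_comp_ofReal_add hu (z.im * I)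
  have hFeven : (fun s => F (-s)) = F := by
    funext s
    simp only [F]
    rw [hsym (s + z.im * I), normSq_conj]
    congr 2
    apply Complex.ext <;> simp
  have hodd := deriv_comp_neg (f := F) (x := z.re)
  rw [hFeven, (hF _).deriv, (hF _).deriv] at hodd
  have hz : ((z.re : ℂ) + z.im * I) = z := re_add_im z
  have hz' : ((-z.re : ℝ) + z.im * I : ℂ) = -conj z := by apply Complex.ext <;> simp
  rw [hz, hz'] at hodd
  linarith

lemma eq_zero_of_deriv_eq_zero (hu : Differentiable ℂ u)
    (hode : ∀ w, deriv (deriv u) w = V w * u w) (hV : ∃ w, V w ≠ 0) (hu' : deriv u = 0) :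
    u = 0 := by
  obtain ⟨w, hw⟩ := hV
  have huw : u w = 0 := by
    have := hode w
    rw [hu'] at this
    simpa [hw] using this.symm
  funext z
  rw [is_const_of_deriv_eq_zero hu (congrFun hu') z w, huw, Pi.zero_apply]

lemma re_deriv_mul_conj_lt (hu : Differentiable ℂ u) (hode : ∀ w, deriv (deriv u) w = V w * u w)
    (hV : ∃ w, V w ≠ 0) (hu0 : u ≠ 0) {a b : ℝ} (hab : a < b) (c : ℂ)
    (hVre : ∀ t ∈ Ioo a b, 0 ≤ (V (t + c)).re) :
    (deriv u (a + c) * conj (u (a + c))).re < (deriv u (b + c) * conj (u (b + c))).re := by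
  have hφ := hasDerivAt_re_deriv_mul_conj_comp_ofReal_add hu hode c
  have hVu : ∀ t ∈ Ioo a b, 0 ≤ (V (t + c)).re * normSq (u (t + c)) :=
    fun t ht => mul_nonneg (hVre t ht) (normSq_nonneg _)
  refine lt_of_hasDerivAt_nonneg_of_exists_ne_zero
    (fun t _ => (hφ t).continuousAt.continuousWithinAt) (fun t _ => hφ t)
    (fun t ht => add_nonneg (normSq_nonneg _) (hVu t ht)) ?_
  by_contra! hzero
  refine hu0 (eq_zero_of_deriv_eq_zero hu hode hV ?_)
  refine hu.deriv.eq_zero_of_forall_mem_Ioo hab c fun t ht => ?_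
  exact normSq_eq_zero.1
    ((add_eq_zero_iff_of_nonneg (normSq_nonneg _) (hVu t ht)).1 (hzero t ht)).1

lemma re_deriv_mul_conj_pos (hu : Differentiable ℂ u) (hode : ∀ w, deriv (deriv u) w = V w * u w)
    (hV : ∃ w, V w ≠ 0) (hu0 : u ≠ 0) (hsym : ∀ z, u z = conj (u (-conj z))) {z : ℂ}
    (hre : 0 < z.re) (hVre : ∀ t ∈ Ioo 0 z.re, 0 ≤ (V (t + z.im * I)).re) :
    0 < (deriv u z * conj (u z)).re := by
  have hlt := re_deriv_mul_conj_lt hu hode hV hu0 hre (z.im * I) hVre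
  have hodd := re_deriv_mul_conj_neg_conj hu hsym (z.im * I)
  simp only [ofReal_zero, zero_add, re_add_im] at hlt
  simp only [map_mul, conj_ofReal, conj_I, mul_neg, neg_neg] at hodd
  linarith

end SecondOrder

theorem re_wronskian_sign_real_eigenvalue_general
    (lam : ℂ) (u : ℂ → ℂ)
    (hu_entire : Differentiable ℂ u)
    (hu_ne : u ≠ 0)
    (hode : ∀ w : ℂ, iteratedDeriv 2 u w = (Complex.I * w ^ 3 - lam) * u w)
    (hsym : ∀ z : ℂ, u z = conj (u (-(conj z)))) :
    ∀ z ∈ closure {v : ℂ | 0 < (Complex.I * v ^ 3 - lam).re ∧ 0 < v.im},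
      (z.re < 0 → (deriv u z * conj (u z)).re < 0) ∧
      (0 < z.re → 0 < (deriv u z * conj (u z)).re) := by
  have hode' : ∀ w, deriv (deriv u) w = (I * w ^ 3 - lam) * u w := fun w => by
    rw [← hode, iteratedDeriv_succ, iteratedDeriv_one]
  have hV : ∃ w, I * w ^ 3 - lam ≠ 0 := by
    by_cases hlam : lam = 0
    · exact ⟨1, by simp [hlam]⟩
    · exact ⟨0, by simpa using hlam⟩
  have hpos : ∀ z : ℂ, 0 < z.re → 0 ≤ z.im → 0 ≤ (I * z ^ 3 - lam).re →
      0 < (deriv u z * conj (u z)).re := fun z hre him hVz =>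
    re_deriv_mul_conj_pos hu_entire hode' hV hu_ne hsym hre fun t ht => hVz.trans <| by
      simpa only [re_add_im] using re_I_mul_pow_three_sub_le lam him ht.1.le ht.2.le
  intro z hz
  obtain ⟨hVz, him⟩ := closure_setOf_re_pos_im_pos_subset (by fun_prop) hz
  refine ⟨fun hre => ?_, fun hre => hpos z hre him hVz⟩
  have := hpos (-conj z) (by simpa using hre) (by simpa using him)
    (by simpa only [re_I_mul_pow_three_sub, neg_re, neg_im, conj_re, conj_im, neg_neg, neg_sq]
      using hVz)
  rw [re_deriv_mul_conj_neg_conj hu_entire hsym] at this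
  linarith

/-- Let `u` be an eigenfunction of the cubic PT-symmetric oscillator
`-u'' - (iz)³u = lam·u` with real eigenvalue `lam`, normalized so that
`u(z) = conj(u(-conj z))` for all `z` (PT-symmetry with respect to the imaginary axis).
Then `Re(u'(z)·conj(u(z))) < 0` on `closure(A₁) ∩ {Re z < 0}` and
`Re(u'(z)·conj(u(z))) > 0` on `closure(A₁) ∩ {Re z > 0}`, where
`A₁ = {z : Re(iz³-lam) > 0, Im z > 0}`. -/
theorem re_wronskian_sign_real_eigenvalue
    (lam : ℂ) (u : ℂ → ℂ)
    (hbeta : lam.im = 0)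
    (hu_entire : Differentiable ℂ u)
    (hu_ne : u ≠ 0)
    (hode : ∀ w : ℂ, iteratedDeriv 2 u w = (Complex.I * w ^ 3 - lam) * u w)
    (hdecay : ∀ M : ℝ, 0 < M → ∃ C₁ > (0 : ℝ), ∃ C₂ > (0 : ℝ), ∀ x y : ℝ, |y| ≤ M →
      ‖u (x + y * Complex.I)‖ + ‖deriv u (x + y * Complex.I)‖
        ≤ C₁ * Real.exp (-(|x| ^ C₂)))
    (hsym : ∀ z : ℂ, u z = conj (u (-(conj z)))) :
    ∀ z ∈ closure {v : ℂ | 0 < (Complex.I * v ^ 3 - lam).re ∧ 0 < v.im},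
      (z.re < 0 → (deriv u z * conj (u z)).re < 0) ∧
      (0 < z.re → 0 < (deriv u z * conj (u z)).re) :=
  re_wronskian_sign_real_eigenvalue_general lam u hu_entire hu_ne hode hsym
end

section
/- Let u : ℂ → ℂ be entire, not identically zero, with u''(z) = (i z³ − λ)·u(z) for all z. Suppose ζ ∈ A₁ and Re(u'(ζ)·conj(u(ζ))) = 0. Then for every t > 0: if ζ − t ∈ A₁ then Re(u'(ζ−t)·conj(u(ζ−t))) < 0, and if ζ + t ∈ A₁ then Re(u'(ζ+t)·conj(u(ζ+t))) > 0. -/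
/-!
Along a horizontal line `s ↦ z + s`, the function `g s = Re (u' ū)(z + s)` has derivative
`Re (i w³ - λ) |u w|² + |u' w|²` at `w = z + s`, by the equation `u'' = (i w³ - λ) u`.
For `Im z > 0` the real part `Re (i (z + s)³ - λ) = y³ - 3 (x + s)² y - α` is concave in `s`,
so the points of the line lying in `A₁` form an interval, on which `g` is therefore monotone.
It is even strictly increasing: the zeros of the nonzero entire function `u` are isolated,
so `g' > 0` somewhere on every subinterval. Hence `g` changes sign at a zero inside `A₁`.
-/

open Complex Real ComplexConjugate

open Set Filter Topology

def A₁ (lam : ℂ) : Set ℂ := {v : ℂ | 0 < (Complex.I * v ^ 3 - lam).re ∧ 0 < v.im}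

lemma concaveOn_re_along_horizontal (lam z : ℂ) (hz : 0 ≤ z.im) :
    ConcaveOn ℝ univ (fun s : ℝ => (I * (z + s) ^ 3 - lam).re) := by
  refine ⟨convex_univ, fun x _ y _ a b ha hb hab => ?_⟩
  simp only [smul_eq_mul, pow_succ, pow_zero, one_mul, add_re, add_im, mul_re, mul_im, I_re, I_im,
    ofReal_re, ofReal_im, sub_re]
  have hb' : b = 1 - a := by linarith
  subst hb'
  nlinarith [mul_nonneg (mul_nonneg ha hb) (mul_nonneg hz (sq_nonneg (x - y)))]

lemma add_ofReal_mem_A₁ {lam z : ℂ} {t s : ℝ} (hz : z ∈ A₁ lam) (hzt : z + t ∈ A₁ lam)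
    (hs : s ∈ Icc 0 t) : z + s ∈ A₁ lam := by
  have hconvex := (concaveOn_re_along_horizontal lam z hz.2.le).convex_gt 0
  have hz₀ : 0 < (I * (z + (0 : ℝ)) ^ 3 - lam).re := by simpa using hz.1
  have hinterval :=
    (convex_iff_ordConnected.1 hconvex).out ⟨mem_univ 0, hz₀⟩ ⟨mem_univ t, hzt.1⟩
  exact ⟨(hinterval hs).2, by simpa using hz.2⟩

lemma lt_of_hasDerivAt_nonneg_of_pos {g g' : ℝ → ℝ} {a b c : ℝ}
    (hder : ∀ s, HasDerivAt g (g' s) s) (hnonneg : ∀ s ∈ Icc a b, 0 ≤ g' s)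
    (hc : c ∈ Ioo a b) (hpos : 0 < g' c) : g a < g b := by
  have hmono : MonotoneOn g (Icc a b) :=
    monotoneOn_of_hasDerivWithinAt_nonneg (convex_Icc a b)
      (fun s _ => (hder s).continuousAt.continuousWithinAt)
      (fun s _ => (hder s).hasDerivWithinAt)
      (fun s hs => hnonneg s (interior_subset hs))
  have hab : a ≤ b := (hc.1.trans hc.2).le
  refine (hmono (left_mem_Icc.2 hab) (right_mem_Icc.2 hab) hab).lt_of_ne fun hgab => ?_
  have hconst : g =ᶠ[𝓝 c] fun _ => g a := by
    filter_upwards [Ioo_mem_nhds hc.1 hc.2] with s hs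
    refine le_antisymm ?_ (hmono (left_mem_Icc.2 hab) (Ioo_subset_Icc_self hs) hs.1.le)
    exact hgab ▸ hmono (Ioo_subset_Icc_self hs) (right_mem_Icc.2 hab) hs.2.le
  exact hpos.ne' ((hder c).unique ((hasDerivAt_const c (g a)).congr_of_eventuallyEq hconst))

lemma exists_ne_zero_add_ofReal {u : ℂ → ℂ} (hu : Differentiable ℂ u) (hu_ne : u ≠ 0)
    (z : ℂ) {a b : ℝ} (hab : a < b) : ∃ c ∈ Ioo a b, u (z + c) ≠ 0 := by
  by_contra! hzero
  obtain ⟨m, hm⟩ : (Ioo a b).Nonempty := nonempty_Ioo.2 hab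
  have hline : Tendsto (fun s : ℝ => z + s) (𝓝[≠] m) (𝓝[≠] (z + m)) :=
    tendsto_nhdsWithin_of_tendsto_nhds_of_eventually_within _
      ((continuous_const.add continuous_ofReal).tendsto' m _ rfl |>.mono_left nhdsWithin_le_nhds)
      (eventually_nhdsWithin_of_forall fun s hs => by simpa using hs)
  have hfreq : ∃ᶠ w in 𝓝[≠] (z + m), u w = 0 :=
    hline.frequently (eventually_nhdsWithin_of_eventually_nhds
      (eventually_of_mem (Ioo_mem_nhds hm.1 hm.2) hzero)).frequently
  have hanalytic : AnalyticOnNhd ℂ u univ := fun w _ => hu.analyticAt w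
  exact hu_ne <| funext fun w =>
    hanalytic.eqOn_zero_of_preconnected_of_frequently_eq_zero isPreconnected_univ (mem_univ _)
      hfreq (mem_univ w)

lemma hasDerivAt_re_deriv_mul_conj {u q : ℂ → ℂ} (hu : Differentiable ℂ u)
    (hode : ∀ w, deriv (deriv u) w = q w * u w) (z : ℂ) (s : ℝ) :
    HasDerivAt (fun s : ℝ => (deriv u (z + s) * conj (u (z + s))).re)
      ((q (z + s)).re * normSq (u (z + s)) + normSq (deriv u (z + s))) s := by
  have hline {f : ℂ → ℂ} (hf : Differentiable ℂ f) :
      HasDerivAt (fun s : ℝ => f (z + s)) (deriv f (z + s)) s :=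
    ((hf (z + s)).hasDerivAt.comp_const_add z s).comp_ofReal
  have hprod := (hode (z + s) ▸ hline hu.deriv).mul (hline hu).star
  refine (reCLM.hasFDerivAt.comp_hasDerivAt s hprod).congr_deriv ?_
  rw [reCLM_apply, add_re, mul_assoc, star_def, mul_conj, mul_conj, re_mul_ofReal, ofReal_re]

lemma re_deriv_mul_conj_lt_of_mem_A₁ {lam : ℂ} {u : ℂ → ℂ} (hu : Differentiable ℂ u)
    (hu_ne : u ≠ 0) (hode : ∀ w, deriv (deriv u) w = (I * w ^ 3 - lam) * u w)
    {z : ℂ} {t : ℝ} (ht : 0 < t) (hz : z ∈ A₁ lam) (hzt : z + t ∈ A₁ lam) :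
    (deriv u z * conj (u z)).re < (deriv u (z + t) * conj (u (z + t))).re := by
  have hA₁ : ∀ s ∈ Icc 0 t, 0 < (I * (z + s) ^ 3 - lam).re := fun s hs =>
    (add_ofReal_mem_A₁ hz hzt hs).1
  have hnonneg : ∀ s ∈ Icc 0 t,
      0 ≤ (I * (z + s) ^ 3 - lam).re * normSq (u (z + s)) + normSq (deriv u (z + s)) :=
    fun s hs => add_nonneg (mul_nonneg (hA₁ s hs).le (normSq_nonneg _)) (normSq_nonneg _)
  obtain ⟨c, hc, huc⟩ := exists_ne_zero_add_ofReal hu hu_ne z ht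
  have hpos : 0 < (I * (z + c) ^ 3 - lam).re * normSq (u (z + c)) + normSq (deriv u (z + c)) :=
    add_pos_of_pos_of_nonneg (mul_pos (hA₁ c (Ioo_subset_Icc_self hc)) (normSq_pos.2 huc))
      (normSq_nonneg _)
  simpa using lt_of_hasDerivAt_nonneg_of_pos (hasDerivAt_re_deriv_mul_conj hu hode z)
    hnonneg hc hpos

/-- Let `u` be entire, not identically zero, with
`u''(z) = (iz³ - lam)·u(z)`.  Suppose `ζ ∈ A₁ = {z : Re(iz³-lam) > 0, Im z > 0}` and
`Re(u'(ζ)·conj(u(ζ))) = 0`.  Then for every `t > 0`: if `ζ - t ∈ A₁` then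
`Re(u'(ζ-t)·conj(u(ζ-t))) < 0`, and if `ζ + t ∈ A₁` then
`Re(u'(ζ+t)·conj(u(ζ+t))) > 0`. -/
theorem re_wronskian_monotone_on_A1
    (lam : ℂ) (u : ℂ → ℂ)
    (hu_entire : Differentiable ℂ u)
    (hu_ne : u ≠ 0)
    (hode : ∀ w : ℂ, iteratedDeriv 2 u w = (Complex.I * w ^ 3 - lam) * u w)
    (ζ : ℂ)
    (hζ : ζ ∈ {v : ℂ | 0 < (Complex.I * v ^ 3 - lam).re ∧ 0 < v.im})
    (hzero : (deriv u ζ * conj (u ζ)).re = 0) :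
    ∀ t : ℝ, 0 < t →
      ((ζ - t) ∈ {v : ℂ | 0 < (Complex.I * v ^ 3 - lam).re ∧ 0 < v.im} →
        (deriv u (ζ - t) * conj (u (ζ - t))).re < 0) ∧
      ((ζ + t) ∈ {v : ℂ | 0 < (Complex.I * v ^ 3 - lam).re ∧ 0 < v.im} →
        0 < (deriv u (ζ + t) * conj (u (ζ + t))).re) := by
  have hode_deriv : ∀ w, deriv (deriv u) w = (I * w ^ 3 - lam) * u w := fun w => by
    rw [← hode w, iteratedDeriv_succ, iteratedDeriv_one]
  intro t ht
  constructor
  · intro hleft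
    have := re_deriv_mul_conj_lt_of_mem_A₁ hu_entire hu_ne hode_deriv ht hleft
      (by rwa [sub_add_cancel])
    rwa [sub_add_cancel, hzero] at this
  · intro hright
    exact hzero ▸ re_deriv_mul_conj_lt_of_mem_A₁ hu_entire hu_ne hode_deriv ht hζ hright
end

section
/- For every y ∈ ℝ, the integral over x ∈ ℝ of (x³ − 3xy² − β)·|u(x+iy)|² dx equals 0. (That is, the polynomial p(x,y) = x³ − 3xy² − β is orthogonal to |u|² along every horizontal line.) -/
/-!
On the horizontal line `t ↦ t + iy` put `F(t) = u(t + iy)`, so that `F'' = V F` with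
`V(t) = i(t + iy)³ - λ` and `Im V(t) = t³ - 3ty² - β`. The quantity `W = Im (conj F · F')` then
satisfies `W' = Im (|F'|² + V |F|²) = Im V · |F|²`, and `W` vanishes at `±∞` because `u` and `u'`
decay there; hence `∫ Im V · |F|² = W(+∞) - W(-∞) = 0`.
-/

open Complex Real ComplexConjugate MeasureTheory Filter Topology Polynomial Set Asymptotics

theorem re_ofReal_add_mul_I_pow_three (x y : ℝ) :
    (((x : ℂ) + y * I) ^ 3).re = x ^ 3 - 3 * x * y ^ 2 := by
  simp only [pow_succ, pow_zero, one_mul, mul_re, add_re, ofReal_re, I_re, mul_zero, ofReal_im,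
    I_im, mul_one, sub_self, add_zero, add_im, mul_im, zero_add]
  ring

theorem hasDerivAt_comp_ofReal_add_mul_I {f : ℂ → ℂ} {x y : ℝ}
    (hf : DifferentiableAt ℂ f (x + y * I)) :
    HasDerivAt (fun t : ℝ => f (t + y * I)) (deriv f (x + y * I)) x :=
  (hf.hasDerivAt.comp_add_const _ _).comp_ofReal

theorem hasDerivAt_im_conj_mul {F G : ℝ → ℂ} {V : ℂ} {x : ℝ}
    (hF : HasDerivAt F (G x) x) (hG : HasDerivAt G (V * F x) x) :
    HasDerivAt (fun t => (conj (F t) * G t).im) (V.im * ‖F x‖ ^ 2) x := by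
  have h : HasDerivAt (fun t => (conj (F t) * G t).im)
      (conj (G x) * G x + conj (F x) * (V * F x)).im x :=
    Complex.imCLM.hasFDerivAt.comp_hasDerivAt x (hF.star.mul hG)
  convert h using 1
  simp only [Complex.sq_norm, normSq_apply, add_im, mul_im, conj_re, conj_im, neg_mul, mul_re]
  ring

theorem integral_im_mul_norm_sq_eq_zero {F G V : ℝ → ℂ}
    (hF : ∀ x, HasDerivAt F (G x) x) (hG : ∀ x, HasDerivAt G (V x * F x) x)
    (hint : Integrable fun x => (V x).im * ‖F x‖ ^ 2)
    (hF0 : Tendsto F (cocompact ℝ) (𝓝 0)) (hG0 : Tendsto G (cocompact ℝ) (𝓝 0)) :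
    ∫ x, (V x).im * ‖F x‖ ^ 2 = 0 := by
  have hW : Tendsto (fun t => (conj (F t) * G t).im) (cocompact ℝ) (𝓝 0) := by
    have h := ((continuous_conj.tendsto 0).comp hF0).mul hG0
    rw [mul_zero] at h
    exact (Complex.continuous_im.tendsto 0).comp h
  rw [integral_of_hasDerivAt_of_tendsto (fun x => hasDerivAt_im_conj_mul (hF x) (hG x)) hint
    (hW.mono_left atBot_le_cocompact) (hW.mono_left atTop_le_cocompact), sub_self]

theorem tendsto_exp_neg_abs_rpow_cocompact {p : ℝ} (hp : 0 < p) :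
    Tendsto (fun x : ℝ => exp (-|x| ^ p)) (cocompact ℝ) (𝓝 0) :=
  tendsto_exp_atBot.comp <| tendsto_neg_atTop_atBot.comp <|
    (tendsto_rpow_atTop hp).comp tendsto_norm_cocompact_atTop

theorem integrable_abs_pow_mul_exp_neg_abs_rpow (n : ℕ) {p : ℝ} (hp : 0 < p) :
    Integrable fun x : ℝ => |x| ^ n * exp (-|x| ^ p) := by
  have hcont : Continuous fun x : ℝ => |x| ^ n * exp (-|x| ^ p) := by
    have := hp.le
    fun_prop
  have hIoi : IntegrableOn (fun x : ℝ => |x| ^ n * exp (-|x| ^ p)) (Ioi 0) :=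
    (integrableOn_rpow_mul_exp_neg_rpow (s := n) (by linarith [n.cast_nonneg (α := ℝ)])
      hp).congr_fun (fun x hx => by simp [abs_of_pos (mem_Ioi.mp hx)]) measurableSet_Ioi
  exact hcont.locallyIntegrable.integrable_of_isBigO_atTop_of_norm_isNegInvariant
    (Eventually.of_forall fun x => by simp) (isBigO_refl _ _) ⟨Ioi 0, Ioi_mem_atTop 0, hIoi⟩

theorem integrable_eval_mul_of_abs_le_exp_neg_abs_rpow (q : ℝ[X]) {g : ℝ → ℝ} {K p : ℝ}
    (hp : 0 < p) (hg : AEStronglyMeasurable g) (hbound : ∀ x, |g x| ≤ K * exp (-|x| ^ p)) :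
    Integrable fun x => q.eval x * g x := by
  have hpow (n : ℕ) : Integrable fun x => x ^ n * g x := by
    refine ((integrable_abs_pow_mul_exp_neg_abs_rpow n hp).const_mul K).mono'
      ((continuous_pow n).aestronglyMeasurable.mul hg) (Eventually.of_forall fun x => ?_)
    rw [norm_mul, norm_pow, Real.norm_eq_abs, Real.norm_eq_abs, mul_left_comm]
    exact mul_le_mul_of_nonneg_left (hbound x) (by positivity)
  simp_rw [eval_eq_sum_range, Finset.sum_mul]
  exact integrable_finsetSum _ fun i _ => by
    simpa only [mul_assoc] using (hpow i).const_mul (q.coeff i)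

theorem integrable_eval_mul_norm_sq_of_norm_le_exp_neg_abs_rpow (q : ℝ[X]) {F : ℝ → ℂ}
    {c p : ℝ} (hp : 0 < p) (hF : Continuous F) (hbound : ∀ x, ‖F x‖ ≤ c * exp (-|x| ^ p)) :
    Integrable fun x => q.eval x * ‖F x‖ ^ 2 := by
  refine integrable_eval_mul_of_abs_le_exp_neg_abs_rpow q (K := c ^ 2) hp
    (hF.norm.pow 2).aestronglyMeasurable fun x => ?_
  have he : exp (-|x| ^ p) ^ 2 ≤ exp (-|x| ^ p) :=
    pow_le_of_le_one (exp_pos _).le (exp_le_one_iff.mpr (by rw [neg_nonpos]; positivity))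
      two_ne_zero
  calc |‖F x‖ ^ 2| = ‖F x‖ ^ 2 := abs_of_nonneg (by positivity)
    _ ≤ (c * exp (-|x| ^ p)) ^ 2 := pow_le_pow_left₀ (norm_nonneg _) (hbound x) 2
    _ = c ^ 2 * exp (-|x| ^ p) ^ 2 := mul_pow _ _ _
    _ ≤ c ^ 2 * exp (-|x| ^ p) := mul_le_mul_of_nonneg_left he (sq_nonneg c)

theorem cubic_polynomial_orthogonal_to_abs_u_sq_general
    (lam : ℂ) (u : ℂ → ℂ)
    (hu_entire : Differentiable ℂ u)
    (hode : ∀ w : ℂ, iteratedDeriv 2 u w = (Complex.I * w ^ 3 - lam) * u w)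
    (hdecay : ∀ M : ℝ, 0 < M → ∃ C₁ > (0 : ℝ), ∃ C₂ > (0 : ℝ), ∀ x y : ℝ, |y| ≤ M →
      ‖u (x + y * Complex.I)‖ + ‖deriv u (x + y * Complex.I)‖
        ≤ C₁ * Real.exp (-(|x| ^ C₂))) :
    ∀ y : ℝ,
      ∫ x : ℝ, (x ^ 3 - 3 * x * y ^ 2 - lam.im)
        * ‖u (x + y * Complex.I)‖ ^ 2 = 0 := by
  intro y
  obtain ⟨c, -, p, hp, hbound⟩ := hdecay (|y| + 1) (by positivity)
  have hF (x : ℝ) : ‖u (x + y * I)‖ ≤ c * exp (-|x| ^ p) :=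
    (le_add_of_nonneg_right (norm_nonneg _)).trans (hbound x y (by linarith))
  have hG (x : ℝ) : ‖deriv u (x + y * I)‖ ≤ c * exp (-|x| ^ p) :=
    (le_add_of_nonneg_left (norm_nonneg _)).trans (hbound x y (by linarith))
  have hexp := (tendsto_exp_neg_abs_rpow_cocompact hp).const_mul c
  rw [mul_zero] at hexp
  have hint := integrable_eval_mul_norm_sq_of_norm_le_exp_neg_abs_rpow
    (X ^ 3 - C 3 * X * C y ^ 2 - C lam.im) hp (hu_entire.continuous.comp (by fun_prop)) hF
  have hV (x : ℝ) : (I * ((x : ℂ) + y * I) ^ 3 - lam).im = x ^ 3 - 3 * x * y ^ 2 - lam.im := by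
    simp [re_ofReal_add_mul_I_pow_three]
  have horth := integral_im_mul_norm_sq_eq_zero (V := fun t => I * (t + y * I) ^ 3 - lam)
    (fun x => hasDerivAt_comp_ofReal_add_mul_I (hu_entire _))
    (fun x => by
      rw [← hode, iteratedDeriv_succ, iteratedDeriv_one]
      exact hasDerivAt_comp_ofReal_add_mul_I (hu_entire.deriv _))
    (by simpa [hV] using hint) (squeeze_zero_norm hF hexp) (squeeze_zero_norm hG hexp)
  simpa only [hV] using horth

/-- Let `u` be an eigenfunction of the cubic PT-symmetric oscillator
`-u'' - (iz)³u = lam·u` with eigenvalue `lam = α + iβ`.  Then for every `y ∈ ℝ`,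
`∫_ℝ (x³ - 3xy² - β)·|u(x+iy)|² dx = 0`. -/
theorem cubic_polynomial_orthogonal_to_abs_u_sq
    (lam : ℂ) (u : ℂ → ℂ)
    (hu_entire : Differentiable ℂ u)
    (hu_ne : u ≠ 0)
    (hode : ∀ w : ℂ, iteratedDeriv 2 u w = (Complex.I * w ^ 3 - lam) * u w)
    (hdecay : ∀ M : ℝ, 0 < M → ∃ C₁ > (0 : ℝ), ∃ C₂ > (0 : ℝ), ∀ x y : ℝ, |y| ≤ M →
      ‖u (x + y * Complex.I)‖ + ‖deriv u (x + y * Complex.I)‖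
        ≤ C₁ * Real.exp (-(|x| ^ C₂))) :
    ∀ y : ℝ,
      ∫ x : ℝ, (x ^ 3 - 3 * x * y ^ 2 - lam.im)
        * ‖u (x + y * Complex.I)‖ ^ 2 = 0 :=
  cubic_polynomial_orthogonal_to_abs_u_sq_general lam u hu_entire hode hdecay
end

section
/- For every integer m ≥ 0 and every y ∈ ℝ, the integral over x ∈ ℝ of p_m(x,y)·|u(x+iy)|² dx equals 0, where p_m(x,y) := (4/(m+1))·(x^{m+5}/(m+5) − 3y²·x^{m+3}/(m+3) − β·x^{m+2}/(m+2))·(x³ − 3y²x − β) − m(m−1)·x^{m−2} − 4x^m·(3x²y − y³ + α) − (12/(m+1))·y·x^{m+2} (for m ∈ {0,1} the term m(m−1)·x^{m−2} is identically 0). -/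
/-!
On the line `z = x + y I` put `f x = u (x + y I)` and `v = f'`, so that `v' = (A + B I) f` where
`A + B I = I z³ - λ` is a polynomial in `x`. With `W = conj f * v` one has `(|f|²)' = 2 Re W`,
`W' = |v|² + (A + B I) |f|²` and `(|v|²)' = 2 (A Re W + B Im W)`. Hence, for polynomials `a`, `d`
with `a' = -2 d B`, the flux `2 a Im W + (d'' - 2 d A) |f|² - 2 d' Re W + 2 d |v|²` has derivative
`(d''' - 4 d' A - 2 d A' + 2 a B) |f|²`. Flux and derivative are polynomials times quantities
decaying like `exp (-|x| ^ c)`, hence integrable, so the integral of the derivative vanishes.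
The multiplier `d = -x ^ (m + 1) / (m + 1)` produces the weight `p_m`.
-/

open Complex Real ComplexConjugate MeasureTheory
open Filter Asymptotics Topology Polynomial

section StretchedExponentialDecay

variable {c : ℝ}

lemma tendsto_abs_rpow_mul_exp_neg_abs_rpow_cocompact (hc : 0 < c) (s : ℝ) :
    Tendsto (fun x : ℝ => |x| ^ s * exp (-|x| ^ c)) (cocompact ℝ) (𝓝 0) := by
  have h := (tendsto_rpow_mul_exp_neg_mul_atTop_nhds_zero (s / c) 1 one_pos).comp
    ((tendsto_rpow_atTop hc).comp (tendsto_norm_cocompact_atTop (E := ℝ)))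
  refine h.congr fun x => ?_
  simp [← rpow_mul (abs_nonneg x), mul_div_cancel₀ _ hc.ne']

lemma Polynomial.tendsto_eval_mul_exp_neg_abs_rpow_cocompact (hc : 0 < c) (P : ℝ[X]) :
    Tendsto (fun x => P.eval x * exp (-|x| ^ c)) (cocompact ℝ) (𝓝 0) := by
  simp only [eval_eq_sum_range, Finset.sum_mul]
  rw [← Finset.sum_const_zero (s := Finset.range (P.natDegree + 1))]
  refine tendsto_finsetSum _ fun i _ => ?_
  refine squeeze_zero_norm (fun x => le_of_eq ?_)
    (by simpa using
      (tendsto_abs_rpow_mul_exp_neg_abs_rpow_cocompact hc i).const_mul |P.coeff i|)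
  simp [mul_assoc]

lemma Polynomial.integrable_eval_mul_of_isBigO (hc : 0 < c) (P : ℝ[X]) {g : ℝ → ℝ}
    (hg : Continuous g) (hg_decay : g =O[cocompact ℝ] fun x => exp (-|x| ^ c)) :
    Integrable fun x => P.eval x * g x := by
  have hbounded :=
    (((1 + X ^ 2) * P).tendsto_eval_mul_exp_neg_abs_rpow_cocompact hc).isBigO_one ℝ
  have hE :
      (fun x => P.eval x * exp (-|x| ^ c)) =O[cocompact ℝ] fun x : ℝ => (1 + x ^ 2)⁻¹ := by
    refine (((isBigO_refl (fun x : ℝ => (1 + x ^ 2)⁻¹) _).mul hbounded).congr (fun x => ?_)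
      (fun x => mul_one _))
    have : 1 + x ^ 2 ≠ 0 := by positivity
    simp only [eval_mul, eval_add, eval_one, eval_pow, eval_X]
    field_simp
  exact (P.continuous.mul hg).locallyIntegrable.integrable_of_isBigO_cocompact
    (((isBigO_refl _ _).mul hg_decay).trans hE)
    (integrable_inv_one_add_sq.integrableAtFilter _)

lemma Asymptotics.IsBigO.mul_of_exp_neg_abs_rpow {R : Type*} [SeminormedRing R]
    {l : Filter ℝ} {g h : ℝ → R} (hg : g =O[l] fun x => exp (-|x| ^ c))
    (hh : h =O[l] fun x => exp (-|x| ^ c)) :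
    (fun x => g x * h x) =O[l] fun x => exp (-|x| ^ c) := by
  refine (hg.mul hh).trans (isBigO_of_le _ fun x => ?_)
  have hE : exp (-|x| ^ c) ≤ 1 := exp_le_one_iff.2 (neg_nonpos.2 (by positivity))
  simp only [norm_mul, Real.norm_of_nonneg (exp_pos _).le]
  exact mul_le_of_le_one_left (exp_pos _).le hE

end StretchedExponentialDecay

lemma HasDerivAt.re {g : ℝ → ℂ} {g' : ℂ} {x : ℝ} (h : HasDerivAt g g' x) :
    HasDerivAt (fun t => (g t).re) g'.re x :=
  reCLM.hasFDerivAt.comp_hasDerivAt x h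

lemma HasDerivAt.im {g : ℝ → ℂ} {g' : ℂ} {x : ℝ} (h : HasDerivAt g g' x) :
    HasDerivAt (fun t => (g t).im) g'.im x :=
  imCLM.hasFDerivAt.comp_hasDerivAt x h

section QuadraticQuantities

variable {f v : ℝ → ℂ} {x : ℝ} {V : ℂ}

lemma hasDerivAt_norm_sq_complex {f' : ℂ} (hf : HasDerivAt f f' x) :
    HasDerivAt (‖f ·‖ ^ 2) (2 * (conj (f x) * f').re) x := by
  simpa [Complex.inner, mul_comm] using hf.norm_sq

lemma hasDerivAt_conj_mul (hf : HasDerivAt f (v x) x) (hv : HasDerivAt v (V * f x) x) :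
    HasDerivAt (fun x => conj (f x) * v x) (‖v x‖ ^ 2 + V * ‖f x‖ ^ 2) x := by
  refine (hf.star.mul hv).congr_deriv ?_
  rw [Complex.star_def, conj_mul', mul_left_comm, conj_mul']

lemma hasDerivAt_norm_sq_of_hasDerivAt_eq_mul (hv : HasDerivAt v (V * f x) x) :
    HasDerivAt (‖v ·‖ ^ 2)
      (2 * (V.re * (conj (f x) * v x).re + V.im * (conj (f x) * v x).im)) x := by
  refine (hasDerivAt_norm_sq_complex hv).congr_deriv ?_
  simp only [mul_re, mul_im, conj_re, conj_im]
  ring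

end QuadraticQuantities

section MomentIdentity

variable (A B a d : ℝ[X]) (f v : ℝ → ℂ)

noncomputable def momentWeight : ℝ[X] :=
  derivative (derivative (derivative d)) - 4 * derivative d * A - 2 * d * derivative A
    + 2 * a * B

noncomputable def momentFlux (x : ℝ) : ℝ :=
  (2 * a).eval x * (conj (f x) * v x).im
    + (derivative (derivative d) - 2 * d * A).eval x * ‖f x‖ ^ 2
    - (2 * derivative d).eval x * (conj (f x) * v x).re + (2 * d).eval x * ‖v x‖ ^ 2

variable {A B a d f v}

theorem hasDerivAt_momentFlux (hf : ∀ x, HasDerivAt f (v x) x)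
    (hv : ∀ x, HasDerivAt v ((A.eval x + B.eval x * I) * f x) x)
    (ha : derivative a = -2 * d * B) (x : ℝ) :
    HasDerivAt (momentFlux A a d f v) ((momentWeight A B a d).eval x * ‖f x‖ ^ 2) x := by
  have hW := hasDerivAt_conj_mul (hf x) (hv x)
  have hΦ := hasDerivAt_norm_sq_complex (hf x)
  have hN := hasDerivAt_norm_sq_of_hasDerivAt_eq_mul (hv x)
  have hflux := (((((2 * a).hasDerivAt x).mul hW.im).add
    (((derivative (derivative d) - 2 * d * A).hasDerivAt x).mul hΦ)).sub
    (((2 * derivative d).hasDerivAt x).mul hW.re)).add (((2 * d).hasDerivAt x).mul hN)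
  refine hflux.congr_deriv ?_
  have ha_x := congrArg (eval x) ha
  set W := conj (f x) * v x
  simp only [momentWeight, derivative_mul, derivative_sub, derivative_ofNat, eval_mul, eval_sub,
    eval_add, eval_ofNat, eval_neg, zero_mul, zero_add, add_re, add_im, mul_re, mul_im,
    ← ofReal_pow, ofReal_re, ofReal_im, I_re, I_im] at ha_x ⊢
  linear_combination (2 * W.im) * ha_x

variable {c : ℝ}

theorem integral_momentWeight_mul_norm_sq_eq_zero (hc : 0 < c)
    (hf : ∀ x, HasDerivAt f (v x) x)
    (hv : ∀ x, HasDerivAt v ((A.eval x + B.eval x * I) * f x) x)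
    (hf_decay : f =O[cocompact ℝ] fun x => exp (-|x| ^ c))
    (hv_decay : v =O[cocompact ℝ] fun x => exp (-|x| ^ c))
    (ha : derivative a = -2 * d * B) :
    ∫ x, (momentWeight A B a d).eval x * ‖f x‖ ^ 2 = 0 := by
  have hf_cont : Continuous f := continuous_iff_continuousAt.2 fun x => (hf x).continuousAt
  have hv_cont : Continuous v := continuous_iff_continuousAt.2 fun x => (hv x).continuousAt
  have hW_cont : Continuous fun x => conj (f x) * v x := by fun_prop
  have hW_decay : (fun x => conj (f x) * v x) =O[cocompact ℝ] fun x => exp (-|x| ^ c) :=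
    (IsBigO.of_norm_left (by simpa only [norm_conj] using hf_decay.norm_left)
      ).mul_of_exp_neg_abs_rpow hv_decay
  have hnorm_sq_decay {g : ℝ → ℂ} (hg : g =O[cocompact ℝ] fun x => exp (-|x| ^ c)) :
      (fun x => ‖g x‖ ^ 2) =O[cocompact ℝ] fun x => exp (-|x| ^ c) := by
    simpa only [sq] using hg.norm_left.mul_of_exp_neg_abs_rpow hg.norm_left
  have hflux : Integrable (momentFlux A a d f v) :=
    ((((2 * a).integrable_eval_mul_of_isBigO hc (continuous_im.comp hW_cont)
        ((isBigO_of_le _ fun x => abs_im_le_norm _).trans hW_decay)).add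
      ((derivative (derivative d) - 2 * d * A).integrable_eval_mul_of_isBigO hc (by fun_prop)
        (hnorm_sq_decay hf_decay))).sub
      ((2 * derivative d).integrable_eval_mul_of_isBigO hc (continuous_re.comp hW_cont)
        ((isBigO_of_le _ fun x => abs_re_le_norm _).trans hW_decay))).add
      ((2 * d).integrable_eval_mul_of_isBigO hc (by fun_prop) (hnorm_sq_decay hv_decay))
  have hweight : Integrable fun x => (momentWeight A B a d).eval x * ‖f x‖ ^ 2 :=
    (momentWeight A B a d).integrable_eval_mul_of_isBigO hc (by fun_prop) (hnorm_sq_decay hf_decay)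
  exact integral_eq_zero_of_hasDerivAt_of_integrable (hasDerivAt_momentFlux hf hv ha) hweight hflux

end MomentIdentity

lemma HasDerivAt.comp_ofReal_add_mul_I {u : ℂ → ℂ} {u' : ℂ} {x y : ℝ}
    (hu : HasDerivAt u u' (x + y * I)) : HasDerivAt (fun x : ℝ => u (x + y * I)) u' x :=
  (HasDerivAt.comp_add_const (x : ℂ) _ hu).comp_ofReal

section CubicOscillator

variable (lam : ℂ) (y : ℝ) (m : ℕ)

noncomputable def cubicPotentialRe : ℝ[X] := C (y ^ 3 - lam.re) - C (3 * y) * X ^ 2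

noncomputable def cubicPotentialIm : ℝ[X] := X ^ 3 - C (3 * y ^ 2) * X - C lam.im

lemma I_mul_pow_three_sub_eq (x : ℝ) :
    I * (x + y * I) ^ 3 - lam =
      (cubicPotentialRe lam y).eval x + (cubicPotentialIm lam y).eval x * I := by
  apply Complex.ext <;>
    simp only [cubicPotentialRe, cubicPotentialIm, eval_sub, eval_mul, eval_C, eval_X,
      sub_re, sub_im, add_re, add_im, mul_re, mul_im, pow_succ, pow_zero, ofReal_re, ofReal_im,
      I_re, I_im, one_re, one_im, eval_one] <;>
    ring

lemma hasDerivAt_deriv_comp_ofReal_add_mul_I {u : ℂ → ℂ} (hu : Differentiable ℂ u)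
    (hode : ∀ w : ℂ, iteratedDeriv 2 u w = (I * w ^ 3 - lam) * u w) (x : ℝ) :
    HasDerivAt (fun x : ℝ => deriv u (x + y * I))
      (((cubicPotentialRe lam y).eval x + (cubicPotentialIm lam y).eval x * I) *
        u (x + y * I)) x := by
  rw [← I_mul_pow_three_sub_eq, ← hode, iteratedDeriv_succ, iteratedDeriv_one]
  exact (hu.deriv _).hasDerivAt.comp_ofReal_add_mul_I

noncomputable def cubicMomentMultiplier : ℝ[X] := -C (1 / ((m : ℝ) + 1)) * X ^ (m + 1)

noncomputable def cubicMomentCompanion : ℝ[X] :=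
  C (2 / ((m : ℝ) + 1)) * (C (1 / ((m : ℝ) + 5)) * X ^ (m + 5)
    - C (3 * y ^ 2 / ((m : ℝ) + 3)) * X ^ (m + 3) - C (lam.im / ((m : ℝ) + 2)) * X ^ (m + 2))

lemma derivative_cubicMomentCompanion :
    derivative (cubicMomentCompanion lam y m) =
      -2 * cubicMomentMultiplier m * cubicPotentialIm lam y := by
  refine Polynomial.funext fun x => ?_
  simp only [cubicMomentCompanion, cubicMomentMultiplier, cubicPotentialIm, derivative_mul,
    derivative_sub, derivative_C, derivative_X_pow_succ, eval_mul, eval_sub, eval_add, eval_neg,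
    eval_C, eval_X, eval_pow, eval_ofNat, eval_zero]
  push_cast
  field_simp
  ring

lemma eval_momentWeight_cubic (x : ℝ) :
    (momentWeight (cubicPotentialRe lam y) (cubicPotentialIm lam y) (cubicMomentCompanion lam y m)
      (cubicMomentMultiplier m)).eval x =
      (4 / ((m : ℝ) + 1)) *
          (x ^ (m + 5) / ((m : ℝ) + 5) - 3 * y ^ 2 * x ^ (m + 3) / ((m : ℝ) + 3)
            - lam.im * x ^ (m + 2) / ((m : ℝ) + 2)) *
          (x ^ 3 - 3 * y ^ 2 * x - lam.im)
        - (m : ℝ) * ((m : ℝ) - 1) * x ^ (m - 2)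
        - 4 * x ^ m * (3 * x ^ 2 * y - y ^ 3 + lam.re)
        - (12 / ((m : ℝ) + 1)) * y * x ^ (m + 2) := by
  simp only [momentWeight, cubicPotentialRe, cubicPotentialIm, cubicMomentCompanion,
    cubicMomentMultiplier, derivative_mul, derivative_sub, derivative_add, derivative_neg,
    derivative_C, derivative_X_pow, derivative_zero, eval_mul, eval_sub, eval_add, eval_neg,
    eval_C, eval_X, eval_pow, eval_ofNat, eval_zero]
  -- `m = 0` separately: there the cast of `m - 1 : ℕ` is not `(m : ℝ) - 1`
  rcases m with _ | m
  · field_simp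
    ring
  · push_cast
    field_simp
    ring

end CubicOscillator

theorem family_orthogonal_to_abs_u_sq_general
    (lam : ℂ) (u : ℂ → ℂ)
    (hu_entire : Differentiable ℂ u)
    (hode : ∀ w : ℂ, iteratedDeriv 2 u w = (Complex.I * w ^ 3 - lam) * u w)
    (hdecay : ∀ M : ℝ, 0 < M → ∃ C₁ > (0 : ℝ), ∃ C₂ > (0 : ℝ), ∀ x y : ℝ, |y| ≤ M →
      ‖u (x + y * Complex.I)‖ + ‖deriv u (x + y * Complex.I)‖
        ≤ C₁ * Real.exp (-(|x| ^ C₂))) :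
    ∀ (m : ℕ) (y : ℝ),
      ∫ x : ℝ,
        ((4 / ((m : ℝ) + 1)) *
            (x ^ (m + 5) / ((m : ℝ) + 5) - 3 * y ^ 2 * x ^ (m + 3) / ((m : ℝ) + 3)
              - lam.im * x ^ (m + 2) / ((m : ℝ) + 2)) *
            (x ^ 3 - 3 * y ^ 2 * x - lam.im)
          - (m : ℝ) * ((m : ℝ) - 1) * x ^ (m - 2)
          - 4 * x ^ m * (3 * x ^ 2 * y - y ^ 3 + lam.re)
          - (12 / ((m : ℝ) + 1)) * y * x ^ (m + 2))
        * ‖u (x + y * Complex.I)‖ ^ 2 = 0 := by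
  intro m y
  obtain ⟨C₁, -, c, hc, hbound⟩ := hdecay (|y| + 1) (by positivity)
  have hbound_y (x : ℝ) :
      ‖u (x + y * I)‖ + ‖deriv u (x + y * I)‖ ≤ C₁ * ‖exp (-|x| ^ c)‖ := by
    rw [Real.norm_of_nonneg (exp_pos _).le]
    exact hbound x y (by linarith)
  have hu_decay : (fun x : ℝ => u (x + y * I)) =O[cocompact ℝ] fun x => exp (-|x| ^ c) :=
    .of_bound C₁ (.of_forall fun x => (le_add_of_nonneg_right (norm_nonneg _)).trans (hbound_y x))
  have hu'_decay : (fun x : ℝ => deriv u (x + y * I)) =O[cocompact ℝ] fun x => exp (-|x| ^ c) :=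
    .of_bound C₁ (.of_forall fun x => (le_add_of_nonneg_left (norm_nonneg _)).trans (hbound_y x))
  have key := integral_momentWeight_mul_norm_sq_eq_zero hc
    (fun x => (hu_entire _).hasDerivAt.comp_ofReal_add_mul_I)
    (hasDerivAt_deriv_comp_ofReal_add_mul_I lam y hu_entire hode) hu_decay hu'_decay
    (derivative_cubicMomentCompanion lam y m)
  simpa only [eval_momentWeight_cubic] using key

/-- Let `u` be an eigenfunction of the cubic PT-symmetric oscillator
`-u'' - (iz)³u = lam·u` with eigenvalue `lam = α + iβ`.  Then for every integer
`m ≥ 0` and every `y ∈ ℝ`, `∫_ℝ p_m(x,y)·|u(x+iy)|² dx = 0`, where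
`p_m(x,y) = (4/(m+1))·(x^{m+5}/(m+5) - 3y²x^{m+3}/(m+3) - βx^{m+2}/(m+2))·(x³-3y²x-β)
  - m(m-1)x^{m-2} - 4x^m(3x²y - y³ + α) - (12/(m+1))·y·x^{m+2}`
(for `m ∈ {0,1}` the term `m(m-1)x^{m-2}` vanishes since its coefficient is zero). -/
theorem family_orthogonal_to_abs_u_sq
    (lam : ℂ) (u : ℂ → ℂ)
    (hu_entire : Differentiable ℂ u)
    (hu_ne : u ≠ 0)
    (hode : ∀ w : ℂ, iteratedDeriv 2 u w = (Complex.I * w ^ 3 - lam) * u w)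
    (hdecay : ∀ M : ℝ, 0 < M → ∃ C₁ > (0 : ℝ), ∃ C₂ > (0 : ℝ), ∀ x y : ℝ, |y| ≤ M →
      ‖u (x + y * Complex.I)‖ + ‖deriv u (x + y * Complex.I)‖
        ≤ C₁ * Real.exp (-(|x| ^ C₂))) :
    ∀ (m : ℕ) (y : ℝ),
      ∫ x : ℝ,
        ((4 / ((m : ℝ) + 1)) *
            (x ^ (m + 5) / ((m : ℝ) + 5) - 3 * y ^ 2 * x ^ (m + 3) / ((m : ℝ) + 3)
              - lam.im * x ^ (m + 2) / ((m : ℝ) + 2)) *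
            (x ^ 3 - 3 * y ^ 2 * x - lam.im)
          - (m : ℝ) * ((m : ℝ) - 1) * x ^ (m - 2)
          - 4 * x ^ m * (3 * x ^ 2 * y - y ^ 3 + lam.re)
          - (12 / ((m : ℝ) + 1)) * y * x ^ (m + 2))
        * ‖u (x + y * Complex.I)‖ ^ 2 = 0 :=
  family_orthogonal_to_abs_u_sq_general lam u hu_entire hode hdecay
end
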